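/- arXiv:math/0606124 — 3 statements merged into one kernel-verified Lean document; each statement's English description precedes it below -/
import Mathlib

section
/- In the ordinary differential polynomial ring k{x,y,z} over a differential field k of characteristic zero, let A = {x(x−1), xy, (x−1)z} and fix a ranking with x < y < z. Then: (1) 1 ∈ [A]:H_A^∞; (2) the radical differential ideal {A} admits the minimal prime decomposition {A} = [x, z] ∩ [x−1, y]; and (3) A is a characteristic set of {A}, whose set of leaders {x, y, z} is not equal to the set of leaders of a characteristic set of either single minimal prime component. -/
open MvPolynomial

namespace DiffAlg

/-! ### Generic commutative-algebra notions -/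

section Commutative

variable {R : Type*} [CommRing R]

/-- `I : S^∞`, the saturation of the ideal `I` by the multiplicative set generated by `S`. -/
def sat (I : Ideal R) (S : Set R) : Set R :=
  {a | ∃ s ∈ Submonoid.closure S, s * a ∈ I}

/-- The ideal generated by `G` inside the subring whose carrier is the set `A`
(coefficients are taken from `A`), viewed as a set. -/
def spanIn (A G : Set R) : Set R :=
  {x | ∃ (m : ℕ) (c g : Fin m → R), (∀ i, c i ∈ A) ∧ (∀ i, g i ∈ G) ∧ x = ∑ i, c i * g i}

/-- The saturation `(G) : S^∞` computed inside the subring whose carrier is the set `A`. -/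
def satIn (A G S : Set R) : Set R :=
  {x | x ∈ A ∧ ∃ s ∈ Submonoid.closure S, s * x ∈ spanIn A G}

variable {ι : Type*}

/-- `I` is a differential ideal w.r.t. the family of derivations `D`. -/
def IsDiffIdeal (D : ι → R → R) (I : Ideal R) : Prop :=
  ∀ j, ∀ f ∈ I, D j f ∈ I

/-- `[F]`, the smallest differential ideal containing `F`. -/
def diffIdeal (D : ι → R → R) (F : Set R) : Ideal R :=
  sInf {I : Ideal R | F ⊆ I ∧ IsDiffIdeal D I}

/-- `{F}`, the smallest radical differential ideal containing `F`. -/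
def radDiffIdeal (D : ι → R → R) (F : Set R) : Ideal R :=
  sInf {I : Ideal R | F ⊆ I ∧ IsDiffIdeal D I ∧ I.IsRadical}

/-- A differential ideal for a single derivation. -/
def IsDiffIdeal1 (D : R → R) (I : Ideal R) : Prop := IsDiffIdeal (fun _ : Unit => D) I

/-- `[F]` for a single derivation. -/
def diffIdeal1 (D : R → R) (F : Set R) : Ideal R := diffIdeal (fun _ : Unit => D) F

/-- `{F}` for a single derivation. -/
def radDiffIdeal1 (D : R → R) (F : Set R) : Ideal R := radDiffIdeal (fun _ : Unit => D) F

end Commutative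

/-! ### Leaders, initials, separants, autoreduced sets, characteristic sets,
for a polynomial ring whose variables carry a ranking `rle` and a
"proper derivative" relation `pd`. -/

section CharSets

variable {k : Type*} [CommRing k] {σ : Type*} [DecidableEq σ]
variable (rle : σ → σ → Prop) (pd : σ → σ → Prop)

/-- The strict order associated with the ranking `rle`. -/
def rlt (u v : σ) : Prop := rle u v ∧ u ≠ v

/-- `u` is the leader of `f`: the highest ranked variable occurring in `f`. -/
def IsLeader (f : MvPolynomial σ k) (u : σ) : Prop :=
  u ∈ f.vars ∧ ∀ v ∈ f.vars, rle v u

/-- The leader of `f` (meaningful when `f` is not a constant). -/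
noncomputable def leader [Nonempty σ] (f : MvPolynomial σ k) : σ :=
  Classical.epsilon (IsLeader rle f)

/-- The initial of `f` w.r.t. the variable `u`: the leading coefficient of `f`
viewed as a univariate polynomial in `u`. -/
noncomputable def initial (u : σ) (f : MvPolynomial σ k) : MvPolynomial σ k :=
  ∑ m ∈ f.support.filter (fun m => m u = f.degreeOf u),
    monomial (m.erase u) (f.coeff m)

/-- The separant of `f`: `∂f/∂u_f`. -/
noncomputable def separant [Nonempty σ] (f : MvPolynomial σ k) : MvPolynomial σ k :=
  pderiv (leader rle f) f

/-- `H_A`: the product of the initials and separants of the elements of `A`. -/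
noncomputable def Hset [Nonempty σ] (A : Finset (MvPolynomial σ k)) : MvPolynomial σ k :=
  ∏ f ∈ A, initial (leader rle f) f * separant rle f

/-- The rank of a polynomial: its leader together with its degree in the leader. -/
noncomputable def rankOf [Nonempty σ] (f : MvPolynomial σ k) : σ × ℕ :=
  (leader rle f, f.degreeOf (leader rle f))

/-- Comparison of ranks: lower leader, or same leader and lower degree. -/
def rkLt (a b : σ × ℕ) : Prop := rlt rle a.1 b.1 ∨ (a.1 = b.1 ∧ a.2 < b.2)

/-- Ritt–Kolchin comparison of rank sequences listed in increasing rank;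
a longer sequence with equal common prefix is lower, and the empty set is highest. -/
def seqLt : List (σ × ℕ) → List (σ × ℕ) → Prop
  | [], _ => False
  | _ :: _, [] => True
  | a :: as, b :: bs => rkLt rle a b ∨ (a = b ∧ seqLt as bs)

def seqLe (A B : List (σ × ℕ)) : Prop := seqLt rle A B ∨ A = B

/-- `A` is of lower or equal rank than `B` in the Ritt–Kolchin sense. -/
def setRankLe [Nonempty σ] (A B : Finset (MvPolynomial σ k)) : Prop :=
  ∃ LA LB : List (MvPolynomial σ k),
    LA.Nodup ∧ LB.Nodup ∧ (∀ f, f ∈ LA ↔ f ∈ A) ∧ (∀ f, f ∈ LB ↔ f ∈ B) ∧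
    (LA.map (rankOf rle)).Chain' (rkLt rle) ∧ (LB.map (rankOf rle)).Chain' (rkLt rle) ∧
    seqLe rle (LA.map (rankOf rle)) (LB.map (rankOf rle))

/-- `f` is partially reduced w.r.t. `g`: no proper derivative of the leader of `g`
occurs in `f`. -/
def PartiallyReducedWrt [Nonempty σ] (f g : MvPolynomial σ k) : Prop :=
  ∀ v ∈ f.vars, ¬ pd v (leader rle g)

/-- `f` is reduced w.r.t. `g`. -/
def ReducedWrt [Nonempty σ] (f g : MvPolynomial σ k) : Prop :=
  PartiallyReducedWrt rle pd f g ∧ f.degreeOf (leader rle g) < g.degreeOf (leader rle g)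

/-- `A` is a (differentially) autoreduced set. -/
def Autoreduced [Nonempty σ] (A : Finset (MvPolynomial σ k)) : Prop :=
  (∀ f ∈ A, f.vars.Nonempty) ∧ ∀ f ∈ A, ∀ g ∈ A, f ≠ g → ReducedWrt rle pd f g

/-- `A` is a characteristic set (in Kolchin's sense) of the set `I`:
an autoreduced subset of `I` of lowest rank. -/
def IsCharSet [Nonempty σ] (I : Set (MvPolynomial σ k)) (A : Finset (MvPolynomial σ k)) : Prop :=
  Autoreduced rle pd A ∧ ↑A ⊆ I ∧
    ∀ B : Finset (MvPolynomial σ k), Autoreduced rle pd B → ↑B ⊆ I → setRankLe rle A B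

/-- `A` is an algebraically autoreduced set (only the degree condition). -/
def AlgAutoreduced [Nonempty σ] (A : Finset (MvPolynomial σ k)) : Prop :=
  (∀ f ∈ A, f.vars.Nonempty) ∧
    ∀ f ∈ A, ∀ g ∈ A, f ≠ g → f.degreeOf (leader rle g) < g.degreeOf (leader rle g)

/-- `A` is an algebraic characteristic set of the set `I`. -/
def IsAlgCharSet [Nonempty σ] (I : Set (MvPolynomial σ k)) (A : Finset (MvPolynomial σ k)) :
    Prop :=
  AlgAutoreduced rle A ∧ ↑A ⊆ I ∧
    ∀ B : Finset (MvPolynomial σ k), AlgAutoreduced rle B → ↑B ⊆ I → setRankLe rle A B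

end CharSets

/-! ### The ordinary differential polynomial ring `k{y_1,…,y_l}` -/

section Ordinary

variable {k : Type*} [CommRing k] {l : ℕ}

/-- The ordinary differential polynomial ring in `l` differential indeterminates:
the variable `(i, n)` represents `y_i^{(n)}`. -/
abbrev DP (k : Type*) [CommRing k] (l : ℕ) := MvPolynomial (Fin l × ℕ) k

/-- `δ` is a derivation of `k`. -/
structure IsFieldDeriv (δ : k → k) : Prop where
  map_add : ∀ a b, δ (a + b) = δ a + δ b
  leibniz : ∀ a b, δ (a * b) = a * δ b + b * δ a

/-- `D` is the derivation of `k{y_1,…,y_l}` extending `δ` with `D y_i^{(n)} = y_i^{(n+1)}`. -/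
structure IsDeriv (δ : k → k) (D : DP k l → DP k l) : Prop where
  map_add : ∀ f g, D (f + g) = D f + D g
  leibniz : ∀ f g, D (f * g) = f * D g + g * D f
  map_C : ∀ a : k, D (C a) = C (δ a)
  map_X : ∀ u : Fin l × ℕ, D (X u) = X (u.1, u.2 + 1)

/-- A ranking on the derivatives `y_i^{(n)}`. -/
structure Ranking (l : ℕ) where
  le : Fin l × ℕ → Fin l × ℕ → Prop
  le_refl : ∀ u, le u u
  le_antisymm : ∀ u v, le u v → le v u → u = v
  le_trans : ∀ u v w, le u v → le v w → le u w
  le_total : ∀ u v, le u v ∨ le v u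
  le_deriv : ∀ u : Fin l × ℕ, le u (u.1, u.2 + 1)
  deriv_mono : ∀ u v : Fin l × ℕ, le u v → le (u.1, u.2 + 1) (v.1, v.2 + 1)

/-- `v` is a proper derivative of `u` (ordinary case). -/
def properDeriv (v u : Fin l × ℕ) : Prop := v.1 = u.1 ∧ u.2 < v.2

/-- An orderly ranking: derivatives of strictly larger order are ranked strictly higher. -/
def Ranking.Orderly (r : Ranking l) : Prop :=
  ∀ u v : Fin l × ℕ, u.2 < v.2 → rlt r.le u v

/-- The order of an ordinary differential polynomial. -/
noncomputable def ordOf (f : DP k l) : ℕ := f.vars.sup fun v => v.2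

/-- The order of a finite set of differential polynomials: the sum of the orders. -/
noncomputable def ordSet (A : Finset (DP k l)) : ℕ := ∑ f ∈ A, ordOf f

/-- The elements of `A` together with their derivatives whose leader is ranked
strictly below `v`. -/
def lowerDerivs [Nonempty (Fin l)] (r : Ranking l) (D : DP k l → DP k l)
    (A : Finset (DP k l)) (v : Fin l × ℕ) : Set (DP k l) :=
  {p | ∃ g ∈ A, ∃ q : ℕ, p = D^[q] g ∧
    rlt r.le ((leader r.le g).1, (leader r.le g).2 + q) v}

/-- `A` is coherent (ordinary case). -/
def Coherent [Nonempty (Fin l)] (r : Ranking l) (D : DP k l → DP k l)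
    (A : Finset (DP k l)) : Prop :=
  ∀ f ∈ A, ∀ g ∈ A, ∀ v : Fin l × ℕ,
    v.1 = (leader r.le f).1 → v.1 = (leader r.le g).1 →
    (leader r.le f).2 ≤ v.2 → (leader r.le g).2 ≤ v.2 →
    separant r.le g * D^[v.2 - (leader r.le f).2] f
      - separant r.le f * D^[v.2 - (leader r.le g).2] g
      ∈ sat (Ideal.span (lowerDerivs r D A v)) {Hset r.le A}

end Ordinary

/-! ### The partial differential polynomial ring `k{y_1,…,y_l}`, derivations `δ_1,…,δ_n` -/

section Partial

variable {k : Type*} [CommRing k] {l n : ℕ}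

/-- The partial differential polynomial ring: the variable `(i, e)` represents
`δ_1^{e 1} ⋯ δ_n^{e n} y_i`. -/
abbrev PDP (k : Type*) [CommRing k] (l n : ℕ) := MvPolynomial (Fin l × (Fin n → ℕ)) k

/-- `D j` are the commuting derivations of `k{y_1,…,y_l}` extending the `δ j`. -/
structure IsPDeriv (δ : Fin n → k → k) (D : Fin n → PDP k l n → PDP k l n) : Prop where
  coeff_add : ∀ j a b, δ j (a + b) = δ j a + δ j b
  coeff_leibniz : ∀ j a b, δ j (a * b) = a * δ j b + b * δ j a
  map_add : ∀ j f g, D j (f + g) = D j f + D j g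
  leibniz : ∀ j f g, D j (f * g) = f * D j g + g * D j f
  map_C : ∀ j (a : k), D j (C a) = C (δ j a)
  map_X : ∀ j (u : Fin l × (Fin n → ℕ)), D j (X u) = X (u.1, u.2 + Pi.single j 1)
  comm : ∀ j j' f, D j (D j' f) = D j' (D j f)

/-- Apply the derivative operator `θ = δ_1^{θ 1} ⋯ δ_n^{θ n}`. -/
def applyTheta {R : Type*} (D : Fin n → R → R) (θ : Fin n → ℕ) (f : R) : R :=
  (List.finRange n).foldr (fun j g => (D j)^[θ j] g) f

/-- The order of a derivative. -/
def ordv (u : Fin l × (Fin n → ℕ)) : ℕ := ∑ j, u.2 j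

/-- A ranking on the derivatives `θ y_i` (partial case). -/
structure PRanking (l n : ℕ) where
  le : (Fin l × (Fin n → ℕ)) → (Fin l × (Fin n → ℕ)) → Prop
  le_refl : ∀ u, le u u
  le_antisymm : ∀ u v, le u v → le v u → u = v
  le_trans : ∀ u v w, le u v → le v w → le u w
  le_total : ∀ u v, le u v ∨ le v u
  le_deriv : ∀ u (j : Fin n), le u (u.1, u.2 + Pi.single j 1)
  deriv_mono : ∀ u v (j : Fin n), le u v → le (u.1, u.2 + Pi.single j 1) (v.1, v.2 + Pi.single j 1)

/-- An orderly ranking (partial case). -/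
def PRanking.Orderly (r : PRanking l n) : Prop :=
  ∀ u v, ordv u < ordv v → rlt r.le u v

/-- `v` is a proper derivative of `u` (partial case). -/
def pProperDeriv (v u : Fin l × (Fin n → ℕ)) : Prop :=
  v.1 = u.1 ∧ (∀ j, u.2 j ≤ v.2 j) ∧ u.2 ≠ v.2

/-- Elements of `A` and their derivatives whose leader is ranked strictly below `v`. -/
def plowerDerivs [Nonempty (Fin l)] (r : PRanking l n) (D : Fin n → PDP k l n → PDP k l n)
    (A : Finset (PDP k l n)) (v : Fin l × (Fin n → ℕ)) : Set (PDP k l n) :=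
  {p | ∃ g ∈ A, ∃ θ : Fin n → ℕ, p = applyTheta D θ g ∧
    rlt r.le ((leader r.le g).1, (leader r.le g).2 + θ) v}

/-- `A` is coherent (partial case). -/
def PCoherent [Nonempty (Fin l)] (r : PRanking l n) (D : Fin n → PDP k l n → PDP k l n)
    (A : Finset (PDP k l n)) : Prop :=
  ∀ f ∈ A, ∀ g ∈ A, ∀ v : Fin l × (Fin n → ℕ),
    v.1 = (leader r.le f).1 → v.1 = (leader r.le g).1 →
    (∀ j, (leader r.le f).2 j ≤ v.2 j) → (∀ j, (leader r.le g).2 j ≤ v.2 j) →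
    separant r.le g * applyTheta D (v.2 - (leader r.le f).2) f
      - separant r.le f * applyTheta D (v.2 - (leader r.le g).2) g
      ∈ sat (Ideal.span (plowerDerivs r D A v)) {Hset r.le A}

end Partial



section Helpers
variable {K : Type*} [CommRing K] {σ : Type*} [DecidableEq σ]

lemma support_pair {m₁ m₂ : σ →₀ ℕ} {c₁ c₂ : K} (h : m₁ ≠ m₂) (h₁ : c₁ ≠ 0) (h₂ : c₂ ≠ 0) :
    (monomial m₁ c₁ + monomial m₂ c₂).support = {m₁, m₂} := by
  ext m
  simp only [mem_support_iff, coeff_add, coeff_monomial, Finset.mem_insert, Finset.mem_singleton]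
  rcases eq_or_ne m m₁ with h1 | h1 <;> rcases eq_or_ne m m₂ with h2 | h2
  · exact absurd (h1.symm.trans h2) h
  · subst h1; simp [if_neg (Ne.symm h2), h₁]
  · subst h2; simp [if_neg (Ne.symm h1), h₂]
  · simp [if_neg (Ne.symm h1), if_neg (Ne.symm h2), h1, h2]

omit [DecidableEq σ] in
lemma one_le_degreeOf {f : MvPolynomial σ K} {u : σ} (h : u ∈ f.vars) :
    1 ≤ f.degreeOf u := by
  rw [mem_vars] at h
  obtain ⟨m, hm, hu⟩ := h
  rw [degreeOf_eq_sup]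
  exact le_trans (Nat.one_le_iff_ne_zero.mpr (Finsupp.mem_support_iff.mp hu))
    (Finset.le_sup (f := fun m => m u) hm)

omit [DecidableEq σ] in
lemma not_mem_vars_of_degreeOf_eq_zero {f : MvPolynomial σ K} {u : σ}
    (h : f.degreeOf u = 0) : u ∉ f.vars := fun hu => by
  have := one_le_degreeOf hu; omega

omit [DecidableEq σ] in
lemma aeval_fix {f : MvPolynomial σ K} {g : σ → MvPolynomial σ K}
    (h : ∀ u ∈ f.vars, g u = X u) : aeval g f = f := by
  have key : aeval g f = ∑ m ∈ f.support, monomial m (coeff m f) := by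
    conv_lhs => rw [← support_sum_monomial_coeff f]
    rw [map_sum]
    refine Finset.sum_congr rfl fun m hm => ?_
    rw [aeval_monomial, monomial_eq]
    congr 1
    refine Finsupp.prod_congr fun u hu => ?_
    rw [h u (mem_vars u |>.mpr ⟨m, hm, hu⟩)]
  rw [key, support_sum_monomial_coeff]

lemma eq_linear_of_vars_subset {f : MvPolynomial σ K} {u : σ}
    (hv : ↑f.vars ⊆ ({u} : Set σ)) (hd : f.degreeOf u ≤ 1) :
    f = C (coeff 0 f) + C (coeff (Finsupp.single u 1) f) * X u := by
  have hsupp : f.support ⊆ {0, Finsupp.single u 1} := by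
    intro m hm
    have hms : m.support ⊆ {u} := by
      intro v hv'
      have : v ∈ f.vars := (mem_vars v).mpr ⟨m, hm, hv'⟩
      simpa using hv this
    have hm1 : m = Finsupp.single u (m u) := Finsupp.support_subset_singleton.mp hms
    have hmu : m u ≤ 1 := by
      rw [degreeOf_eq_sup] at hd
      exact le_trans (Finset.le_sup (f := fun m => m u) hm) hd
    rcases Nat.le_one_iff_eq_zero_or_eq_one.mp hmu with h0 | h1
    · simp only [Finset.mem_insert, Finset.mem_singleton]
      left; rw [hm1, h0, Finsupp.single_zero]
    · simp only [Finset.mem_insert, Finset.mem_singleton]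
      right; rw [hm1, h1]
  have hss := Finset.sum_subset hsupp (f := fun m => monomial m (coeff m f))
    (fun m _ hm => by simp [notMem_support_iff.mp hm])
  have h01 : (0 : σ →₀ ℕ) ≠ Finsupp.single u 1 := by
    intro h; have := DFunLike.congr_fun h u; simp at this
  have key : f = ∑ m ∈ ({0, Finsupp.single u 1} : Finset (σ →₀ ℕ)), monomial m (coeff m f) := by
    conv_lhs => rw [← support_sum_monomial_coeff f]
    exact hss
  nth_rewrite 1 [key]
  rw [Finset.sum_insert (by simpa using h01), Finset.sum_singleton, monomial_zero',
    C_mul_X_eq_monomial]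

end Helpers



section Rank
variable {α : Type*}

lemma exists_rle_max (rle : α → α → Prop)
    (htrans : ∀ u v w, rle u v → rle v w → rle u w)
    (htot : ∀ u v, rle u v ∨ rle v u)
    (s : Finset α) (hs : s.Nonempty) : ∃ b ∈ s, ∀ a ∈ s, rle a b := by
  classical
  induction s using Finset.induction_on with
  | empty => exact absurd hs (by simp)
  | insert a t nmem ih =>
    rcases t.eq_empty_or_nonempty with rfl | ht
    · refine ⟨a, by simp, ?_⟩
      intro x hx
      simp only [Finset.mem_insert, Finset.notMem_empty, or_false] at hx
      subst hx
      rcases htot x x with h | h <;> exact h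
    · obtain ⟨b, hb, hmax⟩ := ih ht
      rcases htot a b with h | h
      · refine ⟨b, Finset.mem_insert_of_mem hb, ?_⟩
        intro c hc
        rcases Finset.mem_insert.mp hc with rfl | hc
        · exact h
        · exact hmax c hc
      · refine ⟨a, Finset.mem_insert_self a t, ?_⟩
        intro c hc
        rcases Finset.mem_insert.mp hc with rfl | hc
        · rcases htot c c with h' | h' <;> exact h'
        · exact htrans c b a (hmax c hc) h

lemma exists_chain_list {β : Type*} (rle : α → α → Prop)
    (htrans : ∀ u v w, rle u v → rle v w → rle u w)
    (htot : ∀ u v, rle u v ∨ rle v u)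
    (key : β → α) :
    ∀ (B : Finset β), (∀ f ∈ B, ∀ g ∈ B, f ≠ g → key f ≠ key g) →
    ∃ L : List β, L.Nodup ∧ (∀ f, f ∈ L ↔ f ∈ B) ∧
      L.Chain' (fun f g => rlt rle (key f) (key g)) := by
  classical
  intro B
  induction B using Finset.strongInduction with
  | _ B ih =>
    intro hinj
    rcases B.eq_empty_or_nonempty with rfl | hne
    · exact ⟨[], by simp, by simp, List.isChain_nil⟩
    · obtain ⟨m, hm, hmin⟩ := exists_rle_max (fun u v => rle v u)
        (fun u v w h1 h2 => htrans w v u h2 h1) (fun u v => (htot v u))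
        (B.image key) (hne.image key)
      obtain ⟨g0, hg0, hkey⟩ := Finset.mem_image.mp hm
      obtain ⟨L', hnd, hmem, hch⟩ := ih (B.erase g0) (Finset.erase_ssubset hg0)
        (fun f hf g hg hfg => hinj f (Finset.mem_of_mem_erase hf) g (Finset.mem_of_mem_erase hg) hfg)
      refine ⟨g0 :: L', ?_, ?_, ?_⟩
      · refine List.nodup_cons.mpr ⟨fun hc => ?_, hnd⟩
        exact (Finset.notMem_erase g0 B) ((hmem g0).mp hc)
      · intro f
        simp only [List.mem_cons, hmem, Finset.mem_erase]
        constructor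
        · rintro (rfl | ⟨_, hf⟩)
          · exact hg0
          · exact hf
        · intro hf
          rcases eq_or_ne f g0 with rfl | hfg
          · exact Or.inl rfl
          · exact Or.inr ⟨hfg, hf⟩
      · refine List.isChain_cons.mpr ?_
        refine ⟨fun y hy => ?_, hch⟩
        have hyL : y ∈ L' := List.mem_of_mem_head? hy
        have hyB : y ∈ B := Finset.mem_of_mem_erase ((hmem y).mp hyL)
        have hyne : y ≠ g0 := (Finset.mem_erase.mp ((hmem y).mp hyL)).1
        refine ⟨?_, ?_⟩
        · rw [hkey]
          exact hmin (key y) (Finset.mem_image_of_mem key hyB)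
        · exact hinj g0 hg0 y hyB (Ne.symm hyne)

end Rank
/-! ### Helper lemmas for the proof -/

section DerivHelpers
set_option linter.unusedSectionVars false

variable {k : Type*} [Field k] [CharZero k] {δ : k → k} {D : DP k 3 → DP k 3}

lemma IsDeriv.zero (hD : IsDeriv δ D) : D 0 = 0 := by
  have h := hD.map_add 0 0
  rw [add_zero] at h
  exact (right_eq_add.mp h)

lemma IsDeriv.one (hD : IsDeriv δ D) : D 1 = 0 := by
  have h := hD.leibniz 1 1
  rw [mul_one, one_mul] at h
  exact (right_eq_add.mp h)

lemma IsDeriv.sub (hD : IsDeriv δ D) (f g : DP k 3) : D (f - g) = D f - D g := by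
  have hneg : D (-g) = - D g := by
    have h := hD.map_add g (-g)
    rw [add_neg_cancel, hD.zero] at h
    exact (neg_eq_of_add_eq_zero_right h.symm).symm
  rw [sub_eq_add_neg, hD.map_add, hneg, sub_eq_add_neg]

lemma IsDeriv.iter_X (hD : IsDeriv δ D) (i : Fin 3) (m : ℕ) :
    ∀ n, D^[n] (X (i, m)) = X (i, m + n)
  | 0 => by simp
  | n + 1 => by
    rw [Function.iterate_succ_apply, hD.map_X, hD.iter_X i (m+1) n]
    congr 1
    simp
    omega

lemma IsDeriv.iter_xsub1 (hD : IsDeriv δ D) (n : ℕ) :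
    D^[n + 1] (X ((0 : Fin 3), (0 : ℕ)) - 1) = X ((0 : Fin 3), n + 1) := by
  rw [Function.iterate_succ_apply, hD.sub, hD.one, hD.map_X, sub_zero, hD.iter_X]
  congr 1
  simp only [Prod.mk.injEq]
  refine ⟨by trivial, by omega⟩

/-- Any differential ideal is closed under iterates of `D`. -/
lemma IsDiffIdeal1.iter {J : Ideal (DP k 3)} (hJ : IsDiffIdeal1 D J) {f : DP k 3}
    (hf : f ∈ J) (n : ℕ) : D^[n] f ∈ J := by
  induction n with
  | zero => exact hf
  | succ n ih => rw [Function.iterate_succ_apply']; exact hJ () _ ih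

lemma isDiffIdeal1_span (hD : IsDeriv δ D) (G : Set (DP k 3))
    (hG : ∀ g ∈ G, D g ∈ Ideal.span G) : IsDiffIdeal1 D (Ideal.span G) := by
  intro _ f hf
  have : f ∈ Ideal.span G ∧ D f ∈ Ideal.span G := by
    refine Submodule.span_induction (p := fun f _ => f ∈ Ideal.span G ∧ D f ∈ Ideal.span G)
      ?_ ?_ ?_ ?_ hf
    · exact fun g hg => ⟨Ideal.subset_span hg, hG g hg⟩
    · refine ⟨zero_mem _, ?_⟩
      rw [hD.zero]; exact zero_mem _
    · rintro f g _ _ ⟨hf1, hf2⟩ ⟨hg1, hg2⟩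
      refine ⟨add_mem hf1 hg1, ?_⟩
      rw [hD.map_add]; exact add_mem hf2 hg2
    · rintro r f _ ⟨hf1, hf2⟩
      refine ⟨Ideal.mul_mem_left _ _ hf1, ?_⟩
      rw [smul_eq_mul, hD.leibniz]
      exact add_mem (Ideal.mul_mem_left _ _ hf2) (Ideal.mul_mem_right _ _ hf1)
  exact this.2

lemma diffIdeal1_eq_span (hD : IsDeriv δ D) (F G : Set (DP k 3))
    (hG : ∀ g ∈ G, D g ∈ Ideal.span G) (hFG : F ⊆ Ideal.span G)
    (hmin : ∀ J : Ideal (DP k 3), F ⊆ J → IsDiffIdeal1 D J → G ⊆ J) :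
    diffIdeal1 D F = Ideal.span G := by
  apply le_antisymm
  · exact sInf_le ⟨hFG, isDiffIdeal1_span hD G hG⟩
  · rw [Ideal.span_le]
    intro g hg
    rw [SetLike.mem_coe, diffIdeal1, diffIdeal, Submodule.mem_sInf]
    rintro J ⟨hJF, hJd⟩
    exact hmin J hJF hJd hg

lemma mem_diffIdeal1_self (D : DP k 3 → DP k 3) (F : Set (DP k 3)) : F ⊆ ↑(diffIdeal1 D F) := by
  intro f hf
  rw [SetLike.mem_coe, diffIdeal1, diffIdeal, Submodule.mem_sInf]
  rintro J ⟨hJF, _⟩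
  exact hJF hf

/-- The key lemma on radical differential ideals: if `pq ∈ J` then all
`D^[i] p * D^[j] q ∈ J`. -/
lemma rad_diff_prod (hD : IsDeriv δ D) {J : Ideal (DP k 3)} (hJd : IsDiffIdeal1 D J)
    (hJr : J.IsRadical) : ∀ (p q : DP k 3), p * q ∈ J → ∀ i j, D^[i] p * D^[j] q ∈ J := by
  have step : ∀ p q : DP k 3, p * q ∈ J → D p * q ∈ J ∧ p * D q ∈ J := by
    intro p q h
    have h1 : p * D q + q * D p ∈ J := by
      have h0 : D (p * q) ∈ J := hJd () _ h
      rwa [hD.leibniz] at h0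
    have h2 : (p * D q) ^ 2 ∈ J := by
      have e : (p * D q) ^ 2 = (p * D q) * (p * D q + q * D p) - (p * q) * (D p * D q) := by
        ring
      rw [e]
      exact sub_mem (Ideal.mul_mem_left _ _ h1) (Ideal.mul_mem_right _ _ h)
    have hq : p * D q ∈ J := hJr ⟨2, h2⟩
    have h3 : (q * D p) ^ 2 ∈ J := by
      have e : (q * D p) ^ 2 = (q * D p) * (p * D q + q * D p) - (p * q) * (D p * D q) := by
        ring
      rw [e]
      exact sub_mem (Ideal.mul_mem_left _ _ h1) (Ideal.mul_mem_right _ _ h)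
    have hp : q * D p ∈ J := hJr ⟨2, h3⟩
    exact ⟨by rwa [mul_comm] at hp, hq⟩
  have left : ∀ (i : ℕ) (p q : DP k 3), p * q ∈ J → D^[i] p * q ∈ J := by
    intro i
    induction i with
    | zero => intro p q h; exact h
    | succ n ih =>
      intro p q h
      rw [Function.iterate_succ_apply]
      exact ih (D p) q (step p q h).1
  have right : ∀ (j : ℕ) (p q : DP k 3), p * q ∈ J → p * D^[j] q ∈ J := by
    intro j
    induction j with
    | zero => intro p q h; exact h
    | succ n ih =>
      intro p q h
      rw [Function.iterate_succ_apply]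
      exact ih p (D q) (step p q h).2
  intro p q h i j
  exact left i p (D^[j] q) (right j p q h)

end DerivHelpers
section Ideals
set_option linter.unusedSectionVars false

variable {k : Type*} [Field k] [CharZero k] {δ : k → k} {D : DP k 3 → DP k 3}

/-- Generators of the first minimal prime `[x, z]`. -/
def G1 (k : Type*) [Field k] : Set (DP k 3) :=
  X '' {u : Fin 3 × ℕ | u.1 = 0 ∨ u.1 = 2}

/-- Generators of the second minimal prime `[x-1, y]`. -/
def G2 (k : Type*) [Field k] : Set (DP k 3) :=
  insert (X ((0 : Fin 3), (0 : ℕ)) - 1)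
    (X '' {u : Fin 3 × ℕ | (u.1 = 0 ∧ u.2 ≠ 0) ∨ u.1 = 1})

noncomputable def phi1 (k : Type*) [Field k] : DP k 3 →ₐ[k] DP k 3 :=
  aeval (fun u => if u.1 = 0 ∨ u.1 = 2 then 0 else X u)

noncomputable def phi2 (k : Type*) [Field k] : DP k 3 →ₐ[k] DP k 3 :=
  aeval (fun u => if u = ((0 : Fin 3), (0 : ℕ)) then 1 else if u.1 = 2 then X u else 0)

lemma sub_phi1_mem (f : DP k 3) : f - phi1 k f ∈ Ideal.span (G1 k) := by
  induction f using MvPolynomial.induction_on with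
  | C a => simp [phi1, aeval_C, algebraMap_eq]
  | add f g hf hg =>
    have : f + g - phi1 k (f + g) = (f - phi1 k f) + (g - phi1 k g) := by
      rw [map_add]; ring
    rw [this]; exact add_mem hf hg
  | mul_X f u hf =>
    rw [map_mul]
    by_cases hu : u.1 = 0 ∨ u.1 = 2
    · have : phi1 k (X u) = 0 := by rw [phi1, aeval_X, if_pos hu]
      rw [this, mul_zero, sub_zero]
      exact Ideal.mul_mem_left _ _ (Ideal.subset_span ⟨u, hu, rfl⟩)
    · have : phi1 k (X u) = X u := by rw [phi1, aeval_X, if_neg hu]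
      rw [this]
      have e : f * X u - phi1 k f * X u = (f - phi1 k f) * X u := by ring
      rw [e]
      exact Ideal.mul_mem_right _ _ hf

lemma span_G1_eq_ker : Ideal.span (G1 k) = RingHom.ker (phi1 k : DP k 3 →+* DP k 3) := by
  apply le_antisymm
  · rw [Ideal.span_le]
    rintro g ⟨u, hu, rfl⟩
    rw [SetLike.mem_coe, RingHom.mem_ker]
    show phi1 k (X u) = 0
    simp only [Set.mem_setOf_eq] at hu
    rw [phi1, aeval_X, if_pos hu]
  · intro f hf
    have h0 : phi1 k f = 0 := hf
    have := sub_phi1_mem (k := k) f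
    rwa [h0, sub_zero] at this

lemma sub_phi2_mem (f : DP k 3) : f - phi2 k f ∈ Ideal.span (G2 k) := by
  induction f using MvPolynomial.induction_on with
  | C a => simp [phi2, aeval_C, algebraMap_eq]
  | add f g hf hg =>
    have : f + g - phi2 k (f + g) = (f - phi2 k f) + (g - phi2 k g) := by
      rw [map_add]; ring
    rw [this]; exact add_mem hf hg
  | mul_X f u hf =>
    rw [map_mul]
    by_cases h0 : u = ((0 : Fin 3), (0 : ℕ))
    · have : phi2 k (X u) = 1 := by rw [phi2, aeval_X, if_pos h0]
      rw [this, mul_one, h0]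
      have e : f * X ((0 : Fin 3), (0 : ℕ)) - phi2 k f =
          (f - phi2 k f) + f * (X ((0 : Fin 3), (0 : ℕ)) - 1) := by ring
      rw [e]
      exact add_mem hf (Ideal.mul_mem_left _ _ (Ideal.subset_span (Set.mem_insert _ _)))
    · by_cases h2 : u.1 = 2
      · have : phi2 k (X u) = X u := by rw [phi2, aeval_X, if_neg h0, if_pos h2]
        rw [this]
        have e : f * X u - phi2 k f * X u = (f - phi2 k f) * X u := by ring
        rw [e]
        exact Ideal.mul_mem_right _ _ hf
      · have : phi2 k (X u) = 0 := by rw [phi2, aeval_X, if_neg h0, if_neg h2]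
        rw [this, mul_zero, sub_zero]
        refine Ideal.mul_mem_left _ _ (Ideal.subset_span ?_)
        refine Set.mem_insert_iff.mpr (Or.inr ⟨u, ?_, rfl⟩)
        obtain ⟨i, n⟩ := u
        fin_cases i
        · simp only [Set.mem_setOf_eq]
          left
          refine ⟨rfl, fun hn => h0 ?_⟩
          simp [hn]
        · simp
        · simp at h2
  
lemma span_G2_eq_ker : Ideal.span (G2 k) = RingHom.ker (phi2 k : DP k 3 →+* DP k 3) := by
  apply le_antisymm
  · rw [Ideal.span_le]
    rintro g hg
    rw [SetLike.mem_coe, RingHom.mem_ker]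
    rcases Set.mem_insert_iff.mp hg with rfl | ⟨u, hu, rfl⟩
    · show phi2 k (X ((0 : Fin 3), (0 : ℕ)) - 1) = 0
      rw [map_sub, map_one, phi2, aeval_X, if_pos rfl, sub_self]
    · show phi2 k (X u) = 0
      have h0 : u ≠ ((0 : Fin 3), (0 : ℕ)) := by
        rintro rfl
        rcases hu with ⟨_, h⟩ | h
        · exact h rfl
        · simp at h
      have h2 : u.1 ≠ 2 := by
        rcases hu with ⟨h, _⟩ | h
        · rw [h]; decide
        · rw [h]; decide
      rw [phi2, aeval_X, if_neg h0, if_neg h2]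
  · intro f hf
    have h0 : phi2 k f = 0 := hf
    have := sub_phi2_mem (k := k) f
    rwa [h0, sub_zero] at this

lemma span_G1_prime : (Ideal.span (G1 k)).IsPrime := by
  rw [span_G1_eq_ker]; exact RingHom.ker_isPrime _

lemma span_G2_prime : (Ideal.span (G2 k)).IsPrime := by
  rw [span_G2_eq_ker]; exact RingHom.ker_isPrime _

lemma D_mem_span_G1 (hD : IsDeriv δ D) : ∀ g ∈ G1 k, D g ∈ Ideal.span (G1 k) := by
  rintro g ⟨u, hu, rfl⟩
  rw [hD.map_X]
  exact Ideal.subset_span ⟨(u.1, u.2 + 1), hu, rfl⟩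

lemma D_mem_span_G2 (hD : IsDeriv δ D) : ∀ g ∈ G2 k, D g ∈ Ideal.span (G2 k) := by
  rintro g hg
  rcases Set.mem_insert_iff.mp hg with rfl | ⟨u, hu, rfl⟩
  · rw [hD.sub, hD.one, hD.map_X, sub_zero]
    exact Ideal.subset_span (Set.mem_insert_iff.mpr (Or.inr ⟨((0 : Fin 3), 1), Or.inl ⟨rfl, one_ne_zero⟩, rfl⟩))
  · rw [hD.map_X]
    refine Ideal.subset_span (Set.mem_insert_iff.mpr (Or.inr ⟨(u.1, u.2 + 1), ?_, rfl⟩))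
    rcases hu with ⟨h, _⟩ | h
    · exact Or.inl ⟨h, Nat.succ_ne_zero _⟩
    · exact Or.inr h

lemma diffIdeal1_xz (hD : IsDeriv δ D) :
    diffIdeal1 D {X ((0 : Fin 3), (0 : ℕ)), X ((2 : Fin 3), (0 : ℕ))} = Ideal.span (G1 k) := by
  refine diffIdeal1_eq_span hD _ _ (D_mem_span_G1 hD) ?_ ?_
  · rintro f (rfl | rfl)
    · exact Ideal.subset_span ⟨((0 : Fin 3), (0 : ℕ)), Or.inl rfl, rfl⟩
    · exact Ideal.subset_span ⟨((2 : Fin 3), (0 : ℕ)), Or.inr rfl, rfl⟩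
  · rintro J hJF hJd g ⟨u, hu, rfl⟩
    rcases hu with h | h
    · have : X (u.1, u.2) = D^[u.2] (X ((u.1 : Fin 3), (0 : ℕ))) := by
        rw [hD.iter_X]; congr 1; simp
      have hx : X ((u.1 : Fin 3), (0 : ℕ)) ∈ J := by
        rw [h]; exact hJF (Set.mem_insert _ _)
      have := hJd.iter hx u.2
      rw [hD.iter_X, zero_add] at this
      simpa using this
    · have hx : X ((u.1 : Fin 3), (0 : ℕ)) ∈ J := by
        rw [h]; exact hJF (Set.mem_insert_iff.mpr (Or.inr rfl))
      have := hJd.iter hx u.2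
      rw [hD.iter_X, zero_add] at this
      simpa using this

lemma diffIdeal1_xy (hD : IsDeriv δ D) :
    diffIdeal1 D {X ((0 : Fin 3), (0 : ℕ)) - 1, X ((1 : Fin 3), (0 : ℕ))} = Ideal.span (G2 k) := by
  refine diffIdeal1_eq_span hD _ _ (D_mem_span_G2 hD) ?_ ?_
  · rintro f (rfl | rfl)
    · exact Ideal.subset_span (Set.mem_insert _ _)
    · exact Ideal.subset_span (Set.mem_insert_iff.mpr (Or.inr ⟨((1 : Fin 3), (0 : ℕ)), Or.inr rfl, rfl⟩))
  · rintro J hJF hJd g hg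
    rcases Set.mem_insert_iff.mp hg with rfl | ⟨u, hu, rfl⟩
    · exact hJF (Set.mem_insert _ _)
    · rcases hu with ⟨h0, hn⟩ | h1
      · obtain ⟨m, hm⟩ := Nat.exists_eq_succ_of_ne_zero hn
        have hx : X ((0 : Fin 3), (0 : ℕ)) - 1 ∈ J := hJF (Set.mem_insert _ _)
        have := hJd.iter hx (m + 1)
        rw [hD.iter_xsub1] at this
        have e : u = ((0 : Fin 3), m + 1) := Prod.ext h0 hm
        rwa [e]
      · have hy : X ((1 : Fin 3), (0 : ℕ)) ∈ J := hJF (Set.mem_insert_iff.mpr (Or.inr rfl))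
        have := hJd.iter hy u.2
        rw [hD.iter_X, zero_add] at this
        have e : u = ((1 : Fin 3), u.2) := Prod.ext h1 rfl
        rwa [e]

end Ideals
section Decomp
set_option linter.unusedSectionVars false

variable {k : Type*} [Field k] [CharZero k] {δ : k → k} {D : DP k 3 → DP k 3}

lemma x_mem_G1 : X ((0 : Fin 3), (0 : ℕ)) ∈ Ideal.span (G1 k) :=
  Ideal.subset_span ⟨((0 : Fin 3), (0 : ℕ)), Or.inl rfl, rfl⟩

lemma z_mem_G1 : X ((2 : Fin 3), (0 : ℕ)) ∈ Ideal.span (G1 k) :=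
  Ideal.subset_span ⟨((2 : Fin 3), (0 : ℕ)), Or.inr rfl, rfl⟩

lemma xm1_mem_G2 : X ((0 : Fin 3), (0 : ℕ)) - 1 ∈ Ideal.span (G2 k) :=
  Ideal.subset_span (Set.mem_insert _ _)

lemma y_mem_G2 : X ((1 : Fin 3), (0 : ℕ)) ∈ Ideal.span (G2 k) :=
  Ideal.subset_span (Set.mem_insert_iff.mpr (Or.inr ⟨((1 : Fin 3), (0 : ℕ)), Or.inr rfl, rfl⟩))

lemma z_not_mem_G2 : X ((2 : Fin 3), (0 : ℕ)) ∉ Ideal.span (G2 k) := by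
  rw [span_G2_eq_ker]
  intro h
  have h0 : phi2 k (X ((2 : Fin 3), (0 : ℕ))) = 0 := h
  rw [phi2, aeval_X] at h0
  have h1 : ((2 : Fin 3), (0 : ℕ)) ≠ ((0 : Fin 3), (0 : ℕ)) := by decide
  rw [if_neg h1, if_pos rfl] at h0
  exact X_ne_zero _ h0

lemma y_not_mem_G1 : X ((1 : Fin 3), (0 : ℕ)) ∉ Ideal.span (G1 k) := by
  rw [span_G1_eq_ker]
  intro h
  have h0 : phi1 k (X ((1 : Fin 3), (0 : ℕ))) = 0 := h
  rw [phi1, aeval_X] at h0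
  have h1 : ¬(((1 : Fin 3), (0 : ℕ)).1 = 0 ∨ ((1 : Fin 3), (0 : ℕ)).1 = 2) := by decide
  rw [if_neg h1] at h0
  exact X_ne_zero _ h0

lemma A_subset_inf :
    ({X ((0 : Fin 3), (0 : ℕ)) * (X ((0 : Fin 3), (0 : ℕ)) - 1),
      X ((0 : Fin 3), (0 : ℕ)) * X ((1 : Fin 3), (0 : ℕ)),
      (X ((0 : Fin 3), (0 : ℕ)) - 1) * X ((2 : Fin 3), (0 : ℕ))} : Set (DP k 3)) ⊆
    ↑(Ideal.span (G1 k) ⊓ Ideal.span (G2 k)) := by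
  intro f hf
  simp only [Set.mem_insert_iff, Set.mem_singleton_iff] at hf
  rw [SetLike.mem_coe, Submodule.mem_inf]
  rcases hf with rfl | rfl | rfl
  · exact ⟨Ideal.mul_mem_right _ _ x_mem_G1, Ideal.mul_mem_left _ _ xm1_mem_G2⟩
  · exact ⟨Ideal.mul_mem_right _ _ x_mem_G1, Ideal.mul_mem_left _ _ y_mem_G2⟩
  · exact ⟨Ideal.mul_mem_left _ _ z_mem_G1, Ideal.mul_mem_right _ _ xm1_mem_G2⟩

lemma radDecomp (hD : IsDeriv δ D) :
    radDiffIdeal1 D {X ((0 : Fin 3), (0 : ℕ)) * (X ((0 : Fin 3), (0 : ℕ)) - 1),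
      X ((0 : Fin 3), (0 : ℕ)) * X ((1 : Fin 3), (0 : ℕ)),
      (X ((0 : Fin 3), (0 : ℕ)) - 1) * X ((2 : Fin 3), (0 : ℕ))} =
    Ideal.span (G1 k) ⊓ Ideal.span (G2 k) := by
  apply le_antisymm
  · refine sInf_le ⟨A_subset_inf, ?_, ?_⟩
    · intro j f hf
      obtain ⟨h1, h2⟩ := Submodule.mem_inf.mp hf
      exact Submodule.mem_inf.mpr
        ⟨isDiffIdeal1_span hD _ (D_mem_span_G1 hD) () f h1,
         isDiffIdeal1_span hD _ (D_mem_span_G2 hD) () f h2⟩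
    · intro a ha
      exact Submodule.mem_inf.mpr
        ⟨span_G1_prime.isRadical (Ideal.radical_mono inf_le_left ha),
         span_G2_prime.isRadical (Ideal.radical_mono inf_le_right ha)⟩
  · intro f hf
    rw [radDiffIdeal1, radDiffIdeal, Submodule.mem_sInf]
    rintro J ⟨hJF, hJd, hJr⟩
    obtain ⟨hf1, hf2⟩ := Submodule.mem_inf.mp hf
    have hp1 : X ((0 : Fin 3), (0 : ℕ)) * (X ((0 : Fin 3), (0 : ℕ)) - 1) ∈ J :=
      hJF (Set.mem_insert _ _)
    have hp2 : X ((0 : Fin 3), (0 : ℕ)) * X ((1 : Fin 3), (0 : ℕ)) ∈ J :=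
      hJF (Set.mem_insert_iff.mpr (Or.inr (Set.mem_insert _ _)))
    have hp3 : (X ((0 : Fin 3), (0 : ℕ)) - 1) * X ((2 : Fin 3), (0 : ℕ)) ∈ J :=
      hJF (Set.mem_insert_iff.mpr (Or.inr (Set.mem_insert_iff.mpr (Or.inr rfl))))
    have hzy : X ((2 : Fin 3), (0 : ℕ)) * X ((1 : Fin 3), (0 : ℕ)) ∈ J := by
      have e : (X ((2 : Fin 3), (0 : ℕ)) : DP k 3) * X ((1 : Fin 3), (0 : ℕ)) =
          (X ((0 : Fin 3), (0 : ℕ)) * X ((1 : Fin 3), (0 : ℕ))) * X ((2 : Fin 3), (0 : ℕ)) -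
          ((X ((0 : Fin 3), (0 : ℕ)) - 1) * X ((2 : Fin 3), (0 : ℕ))) * X ((1 : Fin 3), (0 : ℕ)) := by
        ring
      rw [e]
      exact sub_mem (Ideal.mul_mem_right _ _ hp2) (Ideal.mul_mem_right _ _ hp3)
    have hzx1 : X ((2 : Fin 3), (0 : ℕ)) * (X ((0 : Fin 3), (0 : ℕ)) - 1) ∈ J := by
      rw [mul_comm]; exact hp3
    have H : ∀ g1 ∈ G1 k, ∀ g2 ∈ G2 k, g1 * g2 ∈ J := by
      rintro g1 ⟨u, hu, rfl⟩ g2 hg2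
      have hXu : ∀ i : Fin 3, u.1 = i → X u = D^[u.2] (X ((i : Fin 3), (0 : ℕ))) := by
        intro i hi
        rw [hD.iter_X, zero_add, ← hi]
      rcases Set.mem_insert_iff.mp hg2 with rfl | ⟨v, hv, rfl⟩
      · rcases hu with h | h
        · rw [hXu 0 h]
          have := rad_diff_prod hD hJd hJr _ _ hp1 u.2 0
          simpa using this
        · rw [hXu 2 h]
          have := rad_diff_prod hD hJd hJr _ _ hzx1 u.2 0
          simpa using this
      · rcases hv with ⟨h0, hn⟩ | h1
        · obtain ⟨m, hm⟩ := Nat.exists_eq_succ_of_ne_zero hn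
          have hv' : X v = D^[m + 1] (X ((0 : Fin 3), (0 : ℕ)) - 1) := by
            rw [hD.iter_xsub1, (Prod.ext h0 hm : v = ((0 : Fin 3), m + 1))]
          rcases hu with h | h
          · rw [hXu 0 h, hv']
            exact rad_diff_prod hD hJd hJr _ _ hp1 u.2 (m + 1)
          · rw [hXu 2 h, hv']
            exact rad_diff_prod hD hJd hJr _ _ hzx1 u.2 (m + 1)
        · have hv' : X v = D^[v.2] (X ((1 : Fin 3), (0 : ℕ))) := by
            rw [hD.iter_X, zero_add, ← (Prod.ext h1 rfl : v = ((1 : Fin 3), v.2))]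
          rcases hu with h | h
          · rw [hXu 0 h, hv']
            exact rad_diff_prod hD hJd hJr _ _ hp2 u.2 v.2
          · rw [hXu 2 h, hv']
            exact rad_diff_prod hD hJd hJr _ _ hzy u.2 v.2
    have hmul : Ideal.span (G1 k) * Ideal.span (G2 k) ≤ J := by
      rw [Ideal.span_mul_span', Ideal.span_le]
      rintro p ⟨g1, hg1, g2, hg2, rfl⟩
      exact H g1 hg1 g2 hg2
    have hsq : f * f ∈ J := hmul (Ideal.mul_mem_mul hf1 hf2)
    exact hJr ⟨2, by rwa [pow_two]⟩

end Decomp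
section LeaderFacts
set_option linter.unusedSectionVars false
variable {K : Type*} [CommRing K] {σ : Type*} [Nonempty σ]

lemma leader_eq_of_isLeader {rle : σ → σ → Prop}
    (hanti : ∀ u v, rle u v → rle v u → u = v) {f : MvPolynomial σ K} {u : σ}
    (h : IsLeader rle f u) : leader rle f = u := by
  have hs : IsLeader rle f (leader rle f) := Classical.epsilon_spec ⟨u, h⟩
  exact hanti _ _ (h.2 _ hs.1) (hs.2 _ h.1)

lemma isLeader_leader {rle : σ → σ → Prop}
    (htrans : ∀ u v w, rle u v → rle v w → rle u w)
    (htot : ∀ u v, rle u v ∨ rle v u)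
    {f : MvPolynomial σ K} (hf : f.vars.Nonempty) : IsLeader rle f (leader rle f) := by
  obtain ⟨u, hu, hmax⟩ := exists_rle_max rle htrans htot f.vars hf
  exact Classical.epsilon_spec ⟨u, ⟨hu, hmax⟩⟩

end LeaderFacts

section RankingFacts
set_option linter.unusedSectionVars false

variable (r : Ranking 3)

lemma Ranking.le_iter (i : Fin 3) : ∀ n, r.le (i, 0) (i, n)
  | 0 => r.le_refl _
  | n + 1 => r.le_trans _ _ _ (Ranking.le_iter i n) (r.le_deriv (i, n))

lemma Ranking.le_snd_iter (i : Fin 3) (m : ℕ) : ∀ n, m ≤ n → r.le (i, m) (i, n) := by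
  intro n h
  obtain ⟨d, rfl⟩ := Nat.exists_eq_add_of_le h
  induction d with
  | zero => exact r.le_refl _
  | succ d ih =>
    have : m + (d + 1) = (m + d) + 1 := by omega
    rw [this]
    exact r.le_trans _ _ _ (ih (by omega)) (r.le_deriv (i, m + d))

variable (hxy : rlt r.le ((0 : Fin 3), (0 : ℕ)) ((1 : Fin 3), (0 : ℕ)))
  (hyz : rlt r.le ((1 : Fin 3), (0 : ℕ)) ((2 : Fin 3), (0 : ℕ)))

include hxy hyz in
lemma le_bot_a (u : Fin 3 × ℕ) : r.le ((0 : Fin 3), (0 : ℕ)) u := by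
  obtain ⟨i, n⟩ := u
  fin_cases i
  · exact r.le_iter 0 n
  · exact r.le_trans _ _ _ hxy.1 (r.le_iter 1 n)
  · exact r.le_trans _ _ _ (r.le_trans _ _ _ hxy.1 hyz.1) (r.le_iter 2 n)

include hyz in
lemma le_b_of (u : Fin 3 × ℕ) (h : u.1 = 1 ∨ u.1 = 2) : r.le ((1 : Fin 3), (0 : ℕ)) u := by
  obtain ⟨i, n⟩ := u
  rcases h with h | h
  · simp only at h; subst h; exact r.le_iter 1 n
  · simp only at h; subst h; exact r.le_trans _ _ _ hyz.1 (r.le_iter 2 n)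

lemma le_c_of (u : Fin 3 × ℕ) (h : u.1 = 2) : r.le ((2 : Fin 3), (0 : ℕ)) u := by
  obtain ⟨i, n⟩ := u
  simp only at h; subst h; exact r.le_iter 2 n

include hxy hyz in
lemma var_eq_a (v : Fin 3 × ℕ) (hle : r.le v ((0 : Fin 3), (0 : ℕ))) :
    v = ((0 : Fin 3), (0 : ℕ)) := by
  obtain ⟨i, n⟩ := v
  fin_cases i
  · have h1 : r.le ((0 : Fin 3), (0 : ℕ)) (((0 : Fin 3), n)) := r.le_iter 0 n
    have := r.le_antisymm _ _ hle h1
    exact this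
  · exfalso
    have h1 : r.le ((1 : Fin 3), (0 : ℕ)) ((1 : Fin 3), n) := r.le_iter 1 n
    have h2 : r.le ((1 : Fin 3), (0 : ℕ)) ((0 : Fin 3), (0 : ℕ)) :=
      r.le_trans _ _ _ h1 hle
    exact hxy.2 (r.le_antisymm _ _ hxy.1 h2)
  · exfalso
    have h1 : r.le ((2 : Fin 3), (0 : ℕ)) ((2 : Fin 3), n) := r.le_iter 2 n
    have h2 : r.le ((2 : Fin 3), (0 : ℕ)) ((0 : Fin 3), (0 : ℕ)) :=
      r.le_trans _ _ _ h1 hle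
    have h3 : r.le ((1 : Fin 3), (0 : ℕ)) ((0 : Fin 3), (0 : ℕ)) :=
      r.le_trans _ _ _ hyz.1 h2
    exact hxy.2 (r.le_antisymm _ _ hxy.1 h3)

include hxy hyz in
lemma var_classify_b (v : Fin 3 × ℕ) (hle : r.le v ((1 : Fin 3), (0 : ℕ)))
    (hpd : ¬ properDeriv v ((0 : Fin 3), (0 : ℕ))) :
    v = ((0 : Fin 3), (0 : ℕ)) ∨ v = ((1 : Fin 3), (0 : ℕ)) := by
  obtain ⟨i, n⟩ := v
  fin_cases i
  · left
    rcases Nat.eq_zero_or_pos n with rfl | hn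
    · rfl
    · exact absurd ⟨rfl, hn⟩ hpd
  · right
    have h1 : r.le ((1 : Fin 3), (0 : ℕ)) ((1 : Fin 3), n) := r.le_iter 1 n
    exact r.le_antisymm _ _ hle h1
  · exfalso
    have h1 : r.le ((2 : Fin 3), (0 : ℕ)) ((2 : Fin 3), n) := r.le_iter 2 n
    have h2 : r.le ((2 : Fin 3), (0 : ℕ)) ((1 : Fin 3), (0 : ℕ)) :=
      r.le_trans _ _ _ h1 hle
    exact hyz.2 (r.le_antisymm _ _ hyz.1 h2)

include hxy hyz in
lemma var_classify_c (v : Fin 3 × ℕ) (hle : r.le v ((2 : Fin 3), (0 : ℕ)))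
    (hpda : ¬ properDeriv v ((0 : Fin 3), (0 : ℕ)))
    (hpdb : ¬ properDeriv v ((1 : Fin 3), (0 : ℕ))) :
    v = ((0 : Fin 3), (0 : ℕ)) ∨ v = ((1 : Fin 3), (0 : ℕ)) ∨ v = ((2 : Fin 3), (0 : ℕ)) := by
  obtain ⟨i, n⟩ := v
  fin_cases i
  · left
    rcases Nat.eq_zero_or_pos n with rfl | hn
    · rfl
    · exact absurd ⟨rfl, hn⟩ hpda
  · right; left
    rcases Nat.eq_zero_or_pos n with rfl | hn
    · rfl
    · exact absurd ⟨rfl, hn⟩ hpdb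
  · right; right
    have h1 : r.le ((2 : Fin 3), (0 : ℕ)) ((2 : Fin 3), n) := r.le_iter 2 n
    exact r.le_antisymm _ _ hle h1

lemma not_properDeriv_of_zero (v u : Fin 3 × ℕ) (h : v.2 = 0) : ¬ properDeriv v u := by
  rintro ⟨h1, h2⟩
  omega

end RankingFacts
section PolyComp
set_option linter.unusedSectionVars false

variable {k : Type*} [Field k] [CharZero k]

lemma X_eq {σ : Type*} {K : Type*} [CommRing K] (n : σ) :
    (X n : MvPolynomial σ K) = monomial (Finsupp.single n 1) 1 := rfl

local notation "ua" => (Prod.mk (0 : Fin 3) (0 : ℕ))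
local notation "ub" => (Prod.mk (1 : Fin 3) (0 : ℕ))
local notation "uc" => (Prod.mk (2 : Fin 3) (0 : ℕ))

lemma e1 : (X ua * (X ua - 1) : DP k 3) =
    monomial (Finsupp.single ua 2) 1 + monomial (Finsupp.single ua 1) (-1) := by
  have h : (X ua * X ua : DP k 3) = monomial (Finsupp.single ua 2) 1 := by
    rw [X_eq, monomial_mul, one_mul]
    congr 1
    rw [← Finsupp.single_add]
  have h2 : (monomial (Finsupp.single ua 1) (-1) : DP k 3) = -(X ua) := by
    rw [X_eq, ← map_neg]
  rw [mul_sub, mul_one, h, h2, sub_eq_add_neg]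

lemma e2 : (X ua * X ub : DP k 3) =
    monomial (Finsupp.single ua 1 + Finsupp.single ub 1) 1 := by
  rw [X_eq, X_eq, monomial_mul, one_mul]

lemma e3 : ((X ua - 1) * X uc : DP k 3) =
    monomial (Finsupp.single ua 1 + Finsupp.single uc 1) 1 +
      monomial (Finsupp.single uc 1) (-1) := by
  have h : (X ua * X uc : DP k 3) = monomial (Finsupp.single ua 1 + Finsupp.single uc 1) 1 := by
    rw [X_eq, X_eq, monomial_mul, one_mul]
  have h2 : (monomial (Finsupp.single uc 1) (-1) : DP k 3) = -(X uc) := by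
    rw [X_eq, ← map_neg]
  rw [sub_mul, one_mul, h, h2, sub_eq_add_neg]

lemma ne21 : Finsupp.single (ua : Fin 3 × ℕ) 2 ≠ Finsupp.single ua 1 := by
  intro h
  have := DFunLike.congr_fun h ua
  simp at this

lemma ne_ac : Finsupp.single (ua : Fin 3 × ℕ) 1 + Finsupp.single uc 1 ≠ Finsupp.single uc 1 := by
  intro h
  have := DFunLike.congr_fun h ua
  simp [Finsupp.single_apply] at this

lemma sup1 : (X ua * (X ua - 1) : DP k 3).support =
    {Finsupp.single ua 2, Finsupp.single ua 1} := by
  rw [e1, support_pair ne21 one_ne_zero (neg_ne_zero.mpr one_ne_zero)]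

lemma sup2 : (X ua * X ub : DP k 3).support = {Finsupp.single ua 1 + Finsupp.single ub 1} := by
  classical
  rw [e2, support_monomial, if_neg one_ne_zero]

lemma sup3 : ((X ua - 1) * X uc : DP k 3).support =
    {Finsupp.single ua 1 + Finsupp.single uc 1, Finsupp.single uc 1} := by
  rw [e3, support_pair ne_ac one_ne_zero (neg_ne_zero.mpr one_ne_zero)]

lemma msupab : (Finsupp.single (ua : Fin 3 × ℕ) 1 + Finsupp.single ub 1).support = {ua, ub} := by
  rw [Finsupp.support_add_eq]
  · rw [Finsupp.support_single_ne_zero _ one_ne_zero, Finsupp.support_single_ne_zero _ one_ne_zero]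
    ext v
    simp
  · rw [Finsupp.support_single_ne_zero _ one_ne_zero, Finsupp.support_single_ne_zero _ one_ne_zero]
    simp only [Finset.disjoint_singleton]
    decide

lemma msupac : (Finsupp.single (ua : Fin 3 × ℕ) 1 + Finsupp.single uc 1).support = {ua, uc} := by
  rw [Finsupp.support_add_eq]
  · rw [Finsupp.support_single_ne_zero _ one_ne_zero, Finsupp.support_single_ne_zero _ one_ne_zero]
    ext v
    simp
  · rw [Finsupp.support_single_ne_zero _ one_ne_zero, Finsupp.support_single_ne_zero _ one_ne_zero]
    simp only [Finset.disjoint_singleton]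
    decide

lemma vars1 : (X ua * (X ua - 1) : DP k 3).vars = {ua} := by
  ext v
  simp only [mem_vars, sup1, Finset.mem_insert, Finset.mem_singleton]
  constructor
  · rintro ⟨m, (rfl | rfl), hv⟩ <;>
      simpa using (Finsupp.support_single_subset hv)
  · rintro rfl
    exact ⟨Finsupp.single ua 2, Or.inl rfl, by simp [Finsupp.support_single_ne_zero]⟩

lemma vars2 : (X ua * X ub : DP k 3).vars = {ua, ub} := by
  ext v
  simp only [mem_vars, sup2, Finset.mem_singleton]
  constructor
  · rintro ⟨m, rfl, hv⟩
    rw [msupab] at hv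
    simpa using hv
  · intro hv
    refine ⟨_, rfl, ?_⟩
    rw [msupab]
    simpa using hv

lemma vars3 : ((X ua - 1) * X uc : DP k 3).vars = {ua, uc} := by
  ext v
  simp only [mem_vars, sup3, Finset.mem_insert, Finset.mem_singleton]
  constructor
  · rintro ⟨m, (rfl | rfl), hv⟩
    · rw [msupac] at hv
      simpa using hv
    · rw [Finsupp.support_single_ne_zero _ one_ne_zero] at hv
      simp only [Finset.mem_singleton] at hv
      simp [hv]
  · intro hv
    refine ⟨_, Or.inl rfl, ?_⟩
    rw [msupac]
    simpa using hv

lemma deg1a : (X ua * (X ua - 1) : DP k 3).degreeOf ua = 2 := by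
  rw [degreeOf_eq_sup, sup1, Finset.sup_insert, Finset.sup_singleton]
  simp

lemma deg1b : (X ua * (X ua - 1) : DP k 3).degreeOf ub = 0 := by
  rw [degreeOf_eq_sup, sup1, Finset.sup_insert, Finset.sup_singleton]
  simp [Finsupp.single_apply] <;> decide

lemma deg1c : (X ua * (X ua - 1) : DP k 3).degreeOf uc = 0 := by
  rw [degreeOf_eq_sup, sup1, Finset.sup_insert, Finset.sup_singleton]
  simp [Finsupp.single_apply] <;> decide

lemma deg2a : (X ua * X ub : DP k 3).degreeOf ua = 1 := by
  rw [degreeOf_eq_sup, sup2, Finset.sup_singleton]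
  simp [Finsupp.single_apply] <;> decide

lemma deg2b : (X ua * X ub : DP k 3).degreeOf ub = 1 := by
  rw [degreeOf_eq_sup, sup2, Finset.sup_singleton]
  simp [Finsupp.single_apply] <;> decide

lemma deg2c : (X ua * X ub : DP k 3).degreeOf uc = 0 := by
  rw [degreeOf_eq_sup, sup2, Finset.sup_singleton]
  simp [Finsupp.single_apply] <;> decide

lemma deg3a : ((X ua - 1) * X uc : DP k 3).degreeOf ua = 1 := by
  rw [degreeOf_eq_sup, sup3, Finset.sup_insert, Finset.sup_singleton]
  simp [Finsupp.single_apply] <;> decide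

lemma deg3b : ((X ua - 1) * X uc : DP k 3).degreeOf ub = 0 := by
  rw [degreeOf_eq_sup, sup3, Finset.sup_insert, Finset.sup_singleton]
  simp [Finsupp.single_apply] <;> decide

lemma deg3c : ((X ua - 1) * X uc : DP k 3).degreeOf uc = 1 := by
  rw [degreeOf_eq_sup, sup3, Finset.sup_insert, Finset.sup_singleton]
  simp [Finsupp.single_apply] <;> decide

variable (r : Ranking 3)
variable (hxy : rlt r.le ((0 : Fin 3), (0 : ℕ)) ((1 : Fin 3), (0 : ℕ)))
  (hyz : rlt r.le ((1 : Fin 3), (0 : ℕ)) ((2 : Fin 3), (0 : ℕ)))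

lemma lead1 : leader r.le (X ua * (X ua - 1) : DP k 3) = ua := by
  refine leader_eq_of_isLeader r.le_antisymm ⟨?_, ?_⟩
  · rw [vars1]; simp
  · intro v hv
    rw [vars1] at hv
    simp only [Finset.mem_singleton] at hv
    subst hv
    exact r.le_refl _

include hxy in
lemma lead2 : leader r.le (X ua * X ub : DP k 3) = ub := by
  refine leader_eq_of_isLeader r.le_antisymm ⟨?_, ?_⟩
  · rw [vars2]; simp
  · intro v hv
    rw [vars2] at hv
    simp only [Finset.mem_insert, Finset.mem_singleton] at hv
    rcases hv with rfl | rfl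
    · exact hxy.1
    · exact r.le_refl _

include hxy hyz in
lemma lead3 : leader r.le ((X ua - 1) * X uc : DP k 3) = uc := by
  refine leader_eq_of_isLeader r.le_antisymm ⟨?_, ?_⟩
  · rw [vars3]; simp
  · intro v hv
    rw [vars3] at hv
    simp only [Finset.mem_insert, Finset.mem_singleton] at hv
    rcases hv with rfl | rfl
    · exact r.le_trans _ _ _ hxy.1 hyz.1
    · exact r.le_refl _

lemma init1 : initial ua (X ua * (X ua - 1) : DP k 3) = 1 := by
  rw [initial, sup1, deg1a]
  rw [Finset.filter_insert, if_pos (by simp), Finset.filter_singleton,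
    if_neg (by simp [Finsupp.single_apply]; try decide)]
  rw [Finset.sum_insert (by simp), Finset.sum_empty, add_zero]
  rw [Finsupp.erase_single]
  have : coeff (Finsupp.single (ua : Fin 3 × ℕ) 2) (X ua * (X ua - 1) : DP k 3) = 1 := by
    rw [e1, coeff_add, coeff_monomial, coeff_monomial, if_pos rfl, if_neg (Ne.symm ne21), add_zero]
  rw [this, monomial_zero', C_1]

lemma init2 : initial ub (X ua * X ub : DP k 3) = X ua := by
  rw [initial, sup2, deg2b]
  rw [Finset.filter_singleton, if_pos (by simp [Finsupp.single_apply]; try decide)]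
  rw [Finset.sum_singleton]
  have he : (Finsupp.single (ua : Fin 3 × ℕ) 1 + Finsupp.single ub 1).erase ub =
      Finsupp.single ua 1 := by
    rw [Finsupp.erase_add, Finsupp.erase_single, Finsupp.erase_single_ne (by decide), add_zero]
  have hc : coeff (Finsupp.single (ua : Fin 3 × ℕ) 1 + Finsupp.single ub 1)
      (X ua * X ub : DP k 3) = 1 := by
    rw [e2, coeff_monomial, if_pos rfl]
  rw [he, hc, ← X_eq]

lemma init3 : initial uc ((X ua - 1) * X uc : DP k 3) = X ua - 1 := by
  rw [initial, sup3, deg3c]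
  rw [Finset.filter_insert, if_pos (by simp [Finsupp.single_apply]; try decide), Finset.filter_singleton,
    if_pos (by simp [Finsupp.single_apply]; try decide)]
  rw [Finset.sum_insert (by simp [ne_ac]), Finset.sum_singleton]
  have he : (Finsupp.single (ua : Fin 3 × ℕ) 1 + Finsupp.single uc 1).erase uc =
      Finsupp.single ua 1 := by
    rw [Finsupp.erase_add, Finsupp.erase_single, Finsupp.erase_single_ne (by decide), add_zero]
  have hc : coeff (Finsupp.single (ua : Fin 3 × ℕ) 1 + Finsupp.single uc 1)
      ((X ua - 1) * X uc : DP k 3) = 1 := by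
    rw [e3, coeff_add, coeff_monomial, coeff_monomial, if_pos rfl, if_neg (Ne.symm ne_ac), add_zero]
  have hc2 : coeff (Finsupp.single (uc : Fin 3 × ℕ) 1) ((X ua - 1) * X uc : DP k 3) = -1 := by
    rw [e3, coeff_add, coeff_monomial, coeff_monomial, if_neg ne_ac, if_pos rfl, zero_add]
  rw [he, hc, hc2, Finsupp.erase_single, ← X_eq, monomial_zero']
  rw [map_neg, C_1, sub_eq_add_neg]

lemma sep1 : separant r.le (X ua * (X ua - 1) : DP k 3) = 2 * X ua - 1 := by
  rw [separant, lead1]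
  rw [pderiv_mul]
  simp only [pderiv_X_self, map_sub, pderiv_one, one_mul, sub_zero, mul_one]
  ring

include hxy in
lemma sep2 : separant r.le (X ua * X ub : DP k 3) = X ua := by
  rw [separant, lead2 (k := k) r hxy, pderiv_mul]
  rw [pderiv_X_self, pderiv_X]
  simp [Pi.single_apply]

include hxy hyz in
lemma sep3 : separant r.le ((X ua - 1) * X uc : DP k 3) = X ua - 1 := by
  rw [separant, lead3 (k := k) r hxy hyz, pderiv_mul]
  simp only [map_sub, pderiv_one, pderiv_X_self, mul_one]
  rw [pderiv_X]
  simp [Pi.single_apply]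

end PolyComp
section AFacts
set_option linter.unusedSectionVars false
set_option maxHeartbeats 1000000

variable {k : Type*} [Field k] [CharZero k]

local notation "ua" => (Prod.mk (0 : Fin 3) (0 : ℕ))
local notation "ub" => (Prod.mk (1 : Fin 3) (0 : ℕ))
local notation "uc" => (Prod.mk (2 : Fin 3) (0 : ℕ))

lemma ne12 : (X ua * (X ua - 1) : DP k 3) ≠ X ua * X ub := by
  intro h
  have h2 := congrArg (MvPolynomial.degreeOf ub) h
  rw [deg1b, deg2b] at h2
  exact zero_ne_one h2

lemma ne13 : (X ua * (X ua - 1) : DP k 3) ≠ (X ua - 1) * X uc := by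
  intro h
  have h2 := congrArg (MvPolynomial.degreeOf uc) h
  rw [deg1c, deg3c] at h2
  exact zero_ne_one h2

lemma ne23 : (X ua * X ub : DP k 3) ≠ (X ua - 1) * X uc := by
  intro h
  have h2 := congrArg (MvPolynomial.degreeOf ub) h
  rw [deg2b, deg3b] at h2
  exact one_ne_zero h2

-- facts about X u and X ua - 1
lemma degX_self (u : Fin 3 × ℕ) : (X u : DP k 3).degreeOf u = 1 := by
  rw [degreeOf_eq_sup, support_X, Finset.sup_singleton]
  simp

lemma degX_ne {u v : Fin 3 × ℕ} (h : v ≠ u) : (X u : DP k 3).degreeOf v = 0 := by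
  rw [degreeOf_eq_sup, support_X, Finset.sup_singleton]
  simp [Finsupp.single_apply, Ne.symm h]

lemma e4 : (X ua - 1 : DP k 3) =
    monomial (Finsupp.single ua 1) 1 + monomial 0 (-1) := by
  rw [X_eq, sub_eq_add_neg]
  congr 1
  rw [monomial_zero', map_neg, C_1]

lemma sup4 : (X ua - 1 : DP k 3).support = {Finsupp.single ua 1, 0} := by
  rw [e4, support_pair (by simp [Finsupp.single_eq_zero]) one_ne_zero
    (neg_ne_zero.mpr one_ne_zero)]

lemma vars4 : (X ua - 1 : DP k 3).vars = {ua} := by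
  ext v
  simp only [mem_vars, sup4, Finset.mem_insert, Finset.mem_singleton]
  constructor
  · rintro ⟨m, (rfl | rfl), hv⟩
    · simpa using Finsupp.support_single_subset hv
    · simp at hv
  · rintro rfl
    exact ⟨Finsupp.single ua 1, Or.inl rfl, by simp [Finsupp.support_single_ne_zero]⟩

lemma deg4a : (X ua - 1 : DP k 3).degreeOf ua = 1 := by
  rw [degreeOf_eq_sup, sup4, Finset.sup_insert, Finset.sup_singleton]
  simp

lemma deg4_ne {v : Fin 3 × ℕ} (h : v ≠ ua) : (X ua - 1 : DP k 3).degreeOf v = 0 := by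
  rw [degreeOf_eq_sup, sup4, Finset.sup_insert, Finset.sup_singleton]
  have h0 : Finsupp.single ua 1 v = 0 := by
    rw [Finsupp.single_apply, if_neg (fun he : ua = v => h he.symm)]
  simp [h0]

variable (r : Ranking 3)
variable (hxy : rlt r.le ((0 : Fin 3), (0 : ℕ)) ((1 : Fin 3), (0 : ℕ)))
  (hyz : rlt r.le ((1 : Fin 3), (0 : ℕ)) ((2 : Fin 3), (0 : ℕ)))

lemma leadX (u : Fin 3 × ℕ) : leader r.le (X u : DP k 3) = u := by
  refine leader_eq_of_isLeader r.le_antisymm ⟨?_, ?_⟩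
  · rw [vars_X]; simp
  · intro v hv
    rw [vars_X] at hv
    simp only [Finset.mem_singleton] at hv
    subst hv
    exact r.le_refl _

lemma lead4 : leader r.le (X ua - 1 : DP k 3) = ua := by
  refine leader_eq_of_isLeader r.le_antisymm ⟨?_, ?_⟩
  · rw [vars4]; simp
  · intro v hv
    rw [vars4] at hv
    simp only [Finset.mem_singleton] at hv
    subst hv
    exact r.le_refl _

lemma rankX (u : Fin 3 × ℕ) : rankOf r.le (X u : DP k 3) = (u, 1) := by
  rw [rankOf, leadX, degX_self]

lemma rank4 : rankOf r.le (X ua - 1 : DP k 3) = (ua, 1) := by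
  rw [rankOf, lead4, deg4a]

lemma rank1 : rankOf r.le (X ua * (X ua - 1) : DP k 3) = (ua, 2) := by
  rw [rankOf, lead1, deg1a]

include hxy in
lemma rank2 : rankOf r.le (X ua * X ub : DP k 3) = (ub, 1) := by
  rw [rankOf, lead2 (k := k) r hxy, deg2b]

include hxy hyz in
lemma rank3 : rankOf r.le ((X ua - 1) * X uc : DP k 3) = (uc, 1) := by
  rw [rankOf, lead3 (k := k) r hxy hyz, deg3c]

-- `phi` computations
lemma phi1_C (c : k) : phi1 k (C c) = C c := by rw [phi1, aeval_C, algebraMap_eq]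
lemma phi2_C (c : k) : phi2 k (C c) = C c := by rw [phi2, aeval_C, algebraMap_eq]
lemma phi1_Xa : phi1 k (X ua) = 0 := by
  rw [phi1, aeval_X, if_pos]
  left; rfl
lemma phi2_Xa : phi2 k (X ua) = 1 := by rw [phi2, aeval_X, if_pos rfl]

/-- An element of both prime components whose only variable is `x` has degree at least 2. -/
lemma deg_ge_two (g : DP k 3) (hg1 : g ∈ Ideal.span (G1 k)) (hg2 : g ∈ Ideal.span (G2 k))
    (hv : ↑g.vars ⊆ ({ua} : Set (Fin 3 × ℕ))) (hne : g.vars.Nonempty) :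
    2 ≤ g.degreeOf ua := by
  by_contra hcon
  push_neg at hcon
  have hlin := eq_linear_of_vars_subset hv (by omega)
  have h1 : phi1 k g = C (coeff 0 g) := by
    conv_lhs => rw [hlin]
    rw [map_add, map_mul, phi1_C, phi1_C, phi1_Xa, mul_zero, add_zero]
  have h2 : phi2 k g = C (coeff 0 g + coeff (Finsupp.single ua 1) g) := by
    conv_lhs => rw [hlin]
    rw [map_add, map_mul, phi2_C, phi2_C, phi2_Xa, mul_one, map_add]
  rw [span_G1_eq_ker] at hg1
  rw [span_G2_eq_ker] at hg2
  have hz1 : phi1 k g = 0 := hg1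
  have hz2 : phi2 k g = 0 := hg2
  rw [h1] at hz1
  rw [h2] at hz2
  have hc0 : coeff 0 g = 0 := by
    have := C_injective (Fin 3 × ℕ) k (hz1.trans (map_zero C).symm)
    exact this
  have hc1 : coeff (Finsupp.single ua 1) g = 0 := by
    have := C_injective (Fin 3 × ℕ) k (hz2.trans (map_zero C).symm)
    rw [hc0, zero_add] at this
    exact this
  have hg0 : g = 0 := by
    conv_lhs => rw [hlin]
    rw [hc0, hc1]
    simp
  rw [hg0] at hne
  simp [vars_0] at hne

lemma eq_zero_of_vars_y (g : DP k 3) (hg : g ∈ Ideal.span (G1 k))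
    (hv : ∀ u ∈ g.vars, u.1 = 1) : g = 0 := by
  have hfix : phi1 k g = g := by
    refine aeval_fix (fun u hu => ?_)
    have h1 := hv u hu
    rw [if_neg]
    rw [h1]
    decide
  rw [span_G1_eq_ker] at hg
  have : phi1 k g = 0 := hg
  rw [hfix] at this
  exact this

lemma eq_zero_of_vars_z (g : DP k 3) (hg : g ∈ Ideal.span (G2 k))
    (hv : ∀ u ∈ g.vars, u.1 = 2) : g = 0 := by
  have hfix : phi2 k g = g := by
    refine aeval_fix (fun u hu => ?_)
    have h1 := hv u hu
    rw [if_neg (by rintro rfl; simp at h1), if_pos h1]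
  rw [span_G2_eq_ker] at hg
  have : phi2 k g = 0 := hg
  rw [hfix] at this
  exact this

end AFacts
section MoreFacts
set_option linter.unusedSectionVars false
set_option maxHeartbeats 1000000

variable {k : Type*} [Field k] [CharZero k]

local notation "ua" => (Prod.mk (0 : Fin 3) (0 : ℕ))
local notation "ub" => (Prod.mk (1 : Fin 3) (0 : ℕ))
local notation "uc" => (Prod.mk (2 : Fin 3) (0 : ℕ))

variable (r : Ranking 3)
variable (hxy : rlt r.le ((0 : Fin 3), (0 : ℕ)) ((1 : Fin 3), (0 : ℕ)))
  (hyz : rlt r.le ((1 : Fin 3), (0 : ℕ)) ((2 : Fin 3), (0 : ℕ)))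

include hyz in
lemma le_b_class (v : Fin 3 × ℕ) (hne : v ≠ ua) (hpd : ¬ properDeriv v ua) :
    r.le ub v := by
  obtain ⟨i, n⟩ := v
  fin_cases i
  · exfalso
    rcases Nat.eq_zero_or_pos n with rfl | hn
    · exact hne rfl
    · exact hpd ⟨rfl, hn⟩
  · exact le_b_of r hyz _ (Or.inl rfl)
  · exact le_b_of r hyz _ (Or.inr rfl)

lemma le_c_class (v : Fin 3 × ℕ) (hnea : v ≠ ua) (hneb : v ≠ ub)
    (hpda : ¬ properDeriv v ua) (hpdb : ¬ properDeriv v ub) : r.le uc v := by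
  obtain ⟨i, n⟩ := v
  fin_cases i
  · exfalso
    rcases Nat.eq_zero_or_pos n with rfl | hn
    · exact hnea rfl
    · exact hpda ⟨rfl, hn⟩
  · exfalso
    rcases Nat.eq_zero_or_pos n with rfl | hn
    · exact hneb rfl
    · exact hpdb ⟨rfl, hn⟩
  · exact le_c_of r _ rfl

lemma u4_absurd (v : Fin 3 × ℕ) (hna : v ≠ ua) (hnb : v ≠ ub) (hnc : v ≠ uc)
    (hpda : ¬ properDeriv v ua) (hpdb : ¬ properDeriv v ub)
    (hpdc : ¬ properDeriv v uc) : False := by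
  obtain ⟨i, n⟩ := v
  fin_cases i
  · rcases Nat.eq_zero_or_pos n with rfl | hn
    · exact hna rfl
    · exact hpda ⟨rfl, hn⟩
  · rcases Nat.eq_zero_or_pos n with rfl | hn
    · exact hnb rfl
    · exact hpdb ⟨rfl, hn⟩
  · rcases Nat.eq_zero_or_pos n with rfl | hn
    · exact hnc rfl
    · exact hpdc ⟨rfl, hn⟩

lemma leaders_distinct {B : Finset (DP k 3)} (hB : Autoreduced r.le properDeriv B) :
    ∀ f ∈ B, ∀ g ∈ B, f ≠ g → leader r.le f ≠ leader r.le g := by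
  intro f hf g hg hfg he
  have h1 := (hB.2 f hf g hg hfg).2
  have h2 := (hB.2 g hg f hf hfg.symm).2
  rw [he] at h2
  omega

lemma partRed (f g : DP k 3) (hf : ∀ v ∈ f.vars, v.2 = 0) :
    PartiallyReducedWrt r.le properDeriv f g :=
  fun v hv => not_properDeriv_of_zero v _ (hf v hv)

lemma vars1_snd : ∀ v ∈ (X ua * (X ua - 1) : DP k 3).vars, v.2 = 0 := by
  intro v hv; rw [vars1] at hv; simp only [Finset.mem_singleton] at hv; subst hv; rfl

lemma vars2_snd : ∀ v ∈ (X ua * X ub : DP k 3).vars, v.2 = 0 := by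
  intro v hv; rw [vars2] at hv
  simp only [Finset.mem_insert, Finset.mem_singleton] at hv
  rcases hv with rfl | rfl <;> rfl

lemma vars3_snd : ∀ v ∈ ((X ua - 1) * X uc : DP k 3).vars, v.2 = 0 := by
  intro v hv; rw [vars3] at hv
  simp only [Finset.mem_insert, Finset.mem_singleton] at hv
  rcases hv with rfl | rfl <;> rfl

lemma vars4_snd : ∀ v ∈ (X ua - 1 : DP k 3).vars, v.2 = 0 := by
  intro v hv; rw [vars4] at hv; simp only [Finset.mem_singleton] at hv; subst hv; rfl

lemma varsX_snd (u : Fin 3 × ℕ) (hu : u.2 = 0) : ∀ v ∈ (X u : DP k 3).vars, v.2 = 0 := by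
  intro v hv; rw [vars_X] at hv; simp only [Finset.mem_singleton] at hv; subst hv; exact hu

include hxy hyz in
lemma autoA (A : Finset (DP k 3))
    (hA : (↑A : Set (DP k 3)) = {X ua * (X ua - 1), X ua * X ub, (X ua - 1) * X uc}) :
    Autoreduced r.le properDeriv A := by
  classical
  have hmem : ∀ f, f ∈ A ↔ f = X ua * (X ua - 1) ∨ f = X ua * X ub ∨ f = (X ua - 1) * X uc := by
    intro f
    rw [← Finset.mem_coe, hA]
    simp
  constructor
  · intro f hf
    rcases (hmem f).mp hf with rfl | rfl | rfl
    · rw [vars1]; exact Finset.singleton_nonempty _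
    · rw [vars2]; exact Finset.insert_nonempty _ _
    · rw [vars3]; exact Finset.insert_nonempty _ _
  · intro f hf g hg hfg
    rcases (hmem f).mp hf with rfl | rfl | rfl <;> rcases (hmem g).mp hg with rfl | rfl | rfl
    · exact absurd rfl hfg
    · exact ⟨partRed r _ _ vars1_snd, by rw [lead2 (k := k) r hxy, deg1b, deg2b]; omega⟩
    · exact ⟨partRed r _ _ vars1_snd, by rw [lead3 (k := k) r hxy hyz, deg1c, deg3c]; omega⟩
    · exact ⟨partRed r _ _ vars2_snd, by rw [lead1, deg2a, deg1a]; omega⟩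
    · exact absurd rfl hfg
    · exact ⟨partRed r _ _ vars2_snd, by rw [lead3 (k := k) r hxy hyz, deg2c, deg3c]; omega⟩
    · exact ⟨partRed r _ _ vars3_snd, by rw [lead1, deg3a, deg1a]; omega⟩
    · exact ⟨partRed r _ _ vars3_snd, by rw [lead2 (k := k) r hxy, deg3b, deg2b]; omega⟩
    · exact absurd rfl hfg

lemma neX_ac : (X ua : DP k 3) ≠ X uc := by
  intro h
  have h2 := congrArg (MvPolynomial.degreeOf ua) h
  rw [degX_self, degX_ne (by decide)] at h2
  exact one_ne_zero h2

lemma neX_4b : (X ua - 1 : DP k 3) ≠ X ub := by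
  intro h
  have h2 := congrArg (MvPolynomial.degreeOf ua) h
  rw [deg4a, degX_ne (by decide)] at h2
  exact one_ne_zero h2

/-- The autoreduced set `{x, z}`. -/
noncomputable def xzSet (k : Type*) [Field k] [CharZero k] : Finset (DP k 3) :=
  Finset.cons (X ua) {X uc} (by simp only [Finset.mem_singleton]; exact neX_ac)

/-- The autoreduced set `{x - 1, y}`. -/
noncomputable def xySet (k : Type*) [Field k] [CharZero k] : Finset (DP k 3) :=
  Finset.cons (X ua - 1) {X ub} (by simp only [Finset.mem_singleton]; exact neX_4b)

lemma mem_xzSet (f : DP k 3) : f ∈ xzSet k ↔ f = X ua ∨ f = X uc := by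
  rw [xzSet, Finset.mem_cons, Finset.mem_singleton]

lemma mem_xySet (f : DP k 3) : f ∈ xySet k ↔ f = X ua - 1 ∨ f = X ub := by
  rw [xySet, Finset.mem_cons, Finset.mem_singleton]

include hxy hyz in
lemma auto_xz : Autoreduced r.le properDeriv (xzSet k) := by
  constructor
  · intro f hf
    rcases (mem_xzSet f).mp hf with rfl | rfl <;> · rw [vars_X]; exact Finset.singleton_nonempty _
  · intro f hf g hg hfg
    rcases (mem_xzSet f).mp hf with rfl | rfl <;> rcases (mem_xzSet g).mp hg with rfl | rfl
    · exact absurd rfl hfg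
    · exact ⟨partRed r _ _ (varsX_snd _ rfl), by
        rw [leadX, degX_self, degX_ne (by decide)]; omega⟩
    · exact ⟨partRed r _ _ (varsX_snd _ rfl), by
        rw [leadX, degX_self, degX_ne (by decide)]; omega⟩
    · exact absurd rfl hfg

include hxy hyz in
lemma auto_xy : Autoreduced r.le properDeriv (xySet k) := by
  constructor
  · intro f hf
    rcases (mem_xySet f).mp hf with rfl | rfl
    · rw [vars4]; exact Finset.singleton_nonempty _
    · rw [vars_X]; exact Finset.singleton_nonempty _
  · intro f hf g hg hfg
    rcases (mem_xySet f).mp hf with rfl | rfl <;> rcases (mem_xySet g).mp hg with rfl | rfl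
    · exact absurd rfl hfg
    · exact ⟨partRed r _ _ vars4_snd, by
        rw [leadX, degX_self, deg4_ne (by decide)]; omega⟩
    · exact ⟨partRed r _ _ (varsX_snd _ rfl), by
        rw [lead4, deg4a, degX_ne (by decide)]; omega⟩
    · exact absurd rfl hfg

lemma xzSet_sub : ↑(xzSet k) ⊆ (↑(Ideal.span (G1 k)) : Set (DP k 3)) := by
  intro f hf
  rw [Finset.mem_coe, mem_xzSet] at hf
  rcases hf with rfl | rfl
  · exact x_mem_G1
  · exact z_mem_G1

lemma xySet_sub : ↑(xySet k) ⊆ (↑(Ideal.span (G2 k)) : Set (DP k 3)) := by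
  intro f hf
  rw [Finset.mem_coe, mem_xySet] at hf
  rcases hf with rfl | rfl
  · exact xm1_mem_G2
  · exact y_mem_G2

lemma list_pair {β : Type*} {L : List β} {u v : β} (hnd : L.Nodup)
    (hmem : ∀ f, f ∈ L ↔ f = u ∨ f = v) (huv : u ≠ v) : L = [u, v] ∨ L = [v, u] := by
  have hu : u ∈ L := (hmem u).mpr (Or.inl rfl)
  have hv : v ∈ L := (hmem v).mpr (Or.inr rfl)
  cases L with
  | nil => simp at hu
  | cons a t =>
    cases t with
    | nil =>
      simp only [List.mem_singleton, List.mem_cons, List.not_mem_nil, or_false] at hu hv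
      exact absurd (hu.trans hv.symm) huv
    | cons b t2 =>
      have hane : a ≠ b := by
        have h := List.nodup_cons.mp hnd
        exact fun h' => h.1 (h' ▸ List.mem_cons_self)
      have ha : a = u ∨ a = v := (hmem a).mp (by simp)
      have hb : b = u ∨ b = v := (hmem b).mp (by simp)
      have ht2 : t2 = [] := by
        by_contra hne
        obtain ⟨c, hc⟩ := List.exists_mem_of_ne_nil t2 hne
        have hcuv : c = u ∨ c = v := (hmem c).mp (by simp [hc])
        rcases ha with rfl | rfl <;> rcases hb with rfl | rfl <;> rcases hcuv with h | h
        all_goals first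
          | exact absurd rfl hane
          | (subst h; exact (List.nodup_cons.mp hnd).1 (List.mem_cons_of_mem _ hc))
          | (subst h; exact ((List.nodup_cons.mp (List.nodup_cons.mp hnd).2).1) hc)
      subst ht2
      rcases ha with rfl | rfl <;> rcases hb with rfl | rfl
      · exact absurd rfl hane
      · exact Or.inl rfl
      · exact Or.inr rfl
      · exact absurd rfl hane

end MoreFacts
section Minimality
set_option linter.unusedSectionVars false
set_option maxHeartbeats 1600000

variable {k : Type*} [Field k] [CharZero k]

local notation "ua" => (Prod.mk (0 : Fin 3) (0 : ℕ))
local notation "ub" => (Prod.mk (1 : Fin 3) (0 : ℕ))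
local notation "uc" => (Prod.mk (2 : Fin 3) (0 : ℕ))

variable (r : Ranking 3)
variable (hxy : rlt r.le ((0 : Fin 3), (0 : ℕ)) ((1 : Fin 3), (0 : ℕ)))
  (hyz : rlt r.le ((1 : Fin 3), (0 : ℕ)) ((2 : Fin 3), (0 : ℕ)))

include hxy hyz in
lemma A_setRankLe (A : Finset (DP k 3))
    (hA : (↑A : Set (DP k 3)) = {X ua * (X ua - 1), X ua * X ub, (X ua - 1) * X uc})
    (B : Finset (DP k 3)) (hBred : Autoreduced r.le properDeriv B)
    (hBsub : ∀ g ∈ B, g ∈ Ideal.span (G1 k) ∧ g ∈ Ideal.span (G2 k)) :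
    setRankLe r.le A B := by
  classical
  obtain ⟨LB, hnd, hmem, hch⟩ :=
    exists_chain_list r.le r.le_trans r.le_total (leader r.le) B (leaders_distinct r hBred)
  have hlead : ∀ g ∈ B, IsLeader r.le g (leader r.le g) := fun g hg =>
    isLeader_leader r.le_trans r.le_total (hBred.1 g hg)
  refine ⟨[X ua * (X ua - 1), X ua * X ub, (X ua - 1) * X uc], LB, ?_, hnd, ?_, hmem, ?_, ?_, ?_⟩
  · refine List.nodup_cons.mpr ⟨?_, List.nodup_cons.mpr ⟨?_, List.nodup_singleton _⟩⟩
    · simp only [List.mem_cons, List.mem_singleton, List.not_mem_nil, or_false]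
      push_neg
      exact ⟨ne12, ne13⟩
    · simp only [List.mem_cons, List.mem_singleton, List.not_mem_nil, or_false]
      exact ne23
  · intro f
    rw [← Finset.mem_coe, hA]
    simp
  · rw [List.map_cons, List.map_cons, List.map_cons, List.map_nil,
      rank1, rank2 (k := k) r hxy, rank3 (k := k) r hxy hyz]
    refine List.isChain_cons_cons.mpr ⟨Or.inl hxy, ?_⟩
    exact List.isChain_cons_cons.mpr ⟨Or.inl hyz, List.isChain_singleton _⟩
  · refine (List.isChain_map _).mpr ?_
    exact List.IsChain.imp (fun a b h => Or.inl h) hch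
  · rw [List.map_cons, List.map_cons, List.map_cons, List.map_nil,
      rank1, rank2 (k := k) r hxy, rank3 (k := k) r hxy hyz]
    cases LB with
    | nil => exact Or.inl trivial
    | cons g1 t1 =>
      rw [List.map_cons]
      have hg1B : g1 ∈ B := (hmem g1).mp (List.mem_cons_self)
      have hg1v := hBred.1 g1 hg1B
      have hlead1 := hlead g1 hg1B
      rcases eq_or_ne (leader r.le g1) ua with h1 | h1
      swap
      · refine Or.inl (Or.inl (Or.inl ⟨?_, ?_⟩))
        · exact le_bot_a r hxy hyz (leader r.le g1)
        · exact fun he => h1 he.symm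
      · have hv1 : ↑(vars g1) ⊆ ({ua} : Set (Fin 3 × ℕ)) := by
          intro v hv
          have hle := hlead1.2 v hv
          rw [h1] at hle
          simp [var_eq_a r hxy hyz v hle]
        have hd1 : 2 ≤ degreeOf ua g1 :=
          deg_ge_two g1 (hBsub g1 hg1B).1 (hBsub g1 hg1B).2 hv1 hg1v
        rcases lt_or_eq_of_le hd1 with hdlt | hdeq
        · refine Or.inl (Or.inl (Or.inr ⟨h1.symm, ?_⟩))
          show 2 < degreeOf (leader r.le g1) g1
          rw [h1]
          exact hdlt
        · have hr1 : rankOf r.le g1 = (ua, 2) := by rw [rankOf, h1, ← hdeq]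
          rw [hr1]
          cases t1 with
          | nil => exact Or.inl (Or.inr ⟨rfl, trivial⟩)
          | cons g2 t2 =>
            rw [List.map_cons]
            have hg2B : g2 ∈ B := (hmem g2).mp (by simp)
            have hg12 : g1 ≠ g2 := by
              have h := List.nodup_cons.mp hnd
              exact fun h' => h.1 (h' ▸ List.mem_cons_self)
            have hlead2 := hlead g2 hg2B
            have h2a : leader r.le g2 ≠ ua := fun he =>
              leaders_distinct r hBred g1 hg1B g2 hg2B hg12 (h1.trans he.symm)
            have hred21 := hBred.2 g2 hg2B g1 hg1B hg12.symm
            have hpd2 : ¬ properDeriv (leader r.le g2) ua := by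
              have h := hred21.1 (leader r.le g2) hlead2.1
              rwa [h1] at h
            have hub2 : r.le ub (leader r.le g2) := le_b_class r hyz _ h2a hpd2
            rcases eq_or_ne (leader r.le g2) ub with h2 | h2
            swap
            · exact Or.inl (Or.inr ⟨rfl, Or.inl (Or.inl ⟨hub2, fun he => h2 he.symm⟩)⟩)
            · have hd2 : 1 ≤ degreeOf (leader r.le g2) g2 := one_le_degreeOf hlead2.1
              rcases lt_or_eq_of_le hd2 with hdlt2 | hdeq2
              · exact Or.inl (Or.inr ⟨rfl, Or.inl (Or.inr ⟨h2.symm, hdlt2⟩)⟩)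
              · have hr2 : rankOf r.le g2 = (ub, 1) := by rw [rankOf, h2, ← (h2 ▸ hdeq2 : 1 = degreeOf ub g2)]
                rw [hr2]
                cases t2 with
                | nil => exact Or.inl (Or.inr ⟨rfl, Or.inr ⟨rfl, trivial⟩⟩)
                | cons g3 t3 =>
                  rw [List.map_cons]
                  have hg3B : g3 ∈ B := (hmem g3).mp (by simp)
                  have hnd2 := (List.nodup_cons.mp hnd).2
                  have hg13 : g1 ≠ g3 := by
                    have h := List.nodup_cons.mp hnd
                    exact fun h' => h.1 (h' ▸ (by simp : g3 ∈ g2 :: g3 :: t3))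
                  have hg23 : g2 ≠ g3 := by
                    have h := List.nodup_cons.mp hnd2
                    exact fun h' => h.1 (h' ▸ List.mem_cons_self)
                  have hlead3 := hlead g3 hg3B
                  have h3a : leader r.le g3 ≠ ua := fun he =>
                    leaders_distinct r hBred g1 hg1B g3 hg3B hg13 (h1.trans he.symm)
                  have h3b : leader r.le g3 ≠ ub := fun he =>
                    leaders_distinct r hBred g2 hg2B g3 hg3B hg23 (h2.trans he.symm)
                  have hpd3a : ¬ properDeriv (leader r.le g3) ua := by
                    have h := (hBred.2 g3 hg3B g1 hg1B hg13.symm).1 (leader r.le g3) hlead3.1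
                    rwa [h1] at h
                  have hpd3b : ¬ properDeriv (leader r.le g3) ub := by
                    have h := (hBred.2 g3 hg3B g2 hg2B hg23.symm).1 (leader r.le g3) hlead3.1
                    rwa [h2] at h
                  have huc3 : r.le uc (leader r.le g3) :=
                    le_c_class r _ h3a h3b hpd3a hpd3b
                  rcases eq_or_ne (leader r.le g3) uc with h3 | h3
                  swap
                  · exact Or.inl (Or.inr ⟨rfl, Or.inr ⟨rfl,
                      Or.inl (Or.inl ⟨huc3, fun he => h3 he.symm⟩)⟩⟩)
                  · have hd3 : 1 ≤ degreeOf (leader r.le g3) g3 := one_le_degreeOf hlead3.1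
                    rcases lt_or_eq_of_le hd3 with hdlt3 | hdeq3
                    · exact Or.inl (Or.inr ⟨rfl, Or.inr ⟨rfl,
                        Or.inl (Or.inr ⟨h3.symm, hdlt3⟩)⟩⟩)
                    · have hr3 : rankOf r.le g3 = (uc, 1) := by
                        rw [rankOf, h3, ← (h3 ▸ hdeq3 : 1 = degreeOf uc g3)]
                      rw [hr3]
                      cases t3 with
                      | nil => exact Or.inr rfl
                      | cons g4 t4 =>
                        exfalso
                        have hg4B : g4 ∈ B := (hmem g4).mp (by simp)
                        have hg14 : g1 ≠ g4 := by
                          have h := List.nodup_cons.mp hnd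
                          exact fun h' => h.1 (h' ▸ (by simp : g4 ∈ g2 :: g3 :: g4 :: t4))
                        have hg24 : g2 ≠ g4 := by
                          have h := List.nodup_cons.mp hnd2
                          exact fun h' => h.1 (h' ▸ (by simp : g4 ∈ g3 :: g4 :: t4))
                        have hg34 : g3 ≠ g4 := by
                          have h := List.nodup_cons.mp (List.nodup_cons.mp hnd2).2
                          exact fun h' => h.1 (h' ▸ List.mem_cons_self)
                        have hlead4 := hlead g4 hg4B
                        have h4a : leader r.le g4 ≠ ua := fun he =>
                          leaders_distinct r hBred g1 hg1B g4 hg4B hg14 (h1.trans he.symm)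
                        have h4b : leader r.le g4 ≠ ub := fun he =>
                          leaders_distinct r hBred g2 hg2B g4 hg4B hg24 (h2.trans he.symm)
                        have h4c : leader r.le g4 ≠ uc := fun he =>
                          leaders_distinct r hBred g3 hg3B g4 hg4B hg34 (h3.trans he.symm)
                        have hpd4a : ¬ properDeriv (leader r.le g4) ua := by
                          have h := (hBred.2 g4 hg4B g1 hg1B hg14.symm).1 (leader r.le g4) hlead4.1
                          rwa [h1] at h
                        have hpd4b : ¬ properDeriv (leader r.le g4) ub := by
                          have h := (hBred.2 g4 hg4B g2 hg2B hg24.symm).1 (leader r.le g4) hlead4.1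
                          rwa [h2] at h
                        have hpd4c : ¬ properDeriv (leader r.le g4) uc := by
                          have h := (hBred.2 g4 hg4B g3 hg3B hg34.symm).1 (leader r.le g4) hlead4.1
                          rwa [h3] at h
                        exact u4_absurd _ h4a h4b h4c hpd4a hpd4b hpd4c

end Minimality
section Final
set_option linter.unusedSectionVars false
set_option maxHeartbeats 1600000

variable {k : Type*} [Field k] [CharZero k]

local notation "ua" => (Prod.mk (0 : Fin 3) (0 : ℕ))
local notation "ub" => (Prod.mk (1 : Fin 3) (0 : ℕ))
local notation "uc" => (Prod.mk (2 : Fin 3) (0 : ℕ))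

variable (r : Ranking 3)
variable (hxy : rlt r.le ((0 : Fin 3), (0 : ℕ)) ((1 : Fin 3), (0 : ℕ)))
  (hyz : rlt r.le ((1 : Fin 3), (0 : ℕ)) ((2 : Fin 3), (0 : ℕ)))

include hxy hyz in
lemma Hset_factor (A : Finset (DP k 3))
    (hA : (↑A : Set (DP k 3)) = {X ua * (X ua - 1), X ua * X ub, (X ua - 1) * X uc}) :
    ∃ w : DP k 3, Hset r.le A = w * (X ua * (X ua - 1)) := by
  classical
  have hAeq : A = insert (X ua * (X ua - 1)) (insert (X ua * X ub) {(X ua - 1) * X uc}) := by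
    apply Finset.coe_injective
    rw [hA]
    simp
  rw [Hset, hAeq]
  rw [Finset.prod_insert (by
      simp only [Finset.mem_insert, Finset.mem_singleton]
      push_neg
      exact ⟨ne12, ne13⟩),
    Finset.prod_insert (by
      simp only [Finset.mem_singleton]
      exact ne23),
    Finset.prod_singleton]
  rw [lead1, lead2 (k := k) r hxy, lead3 (k := k) r hxy hyz, init1, init2, init3,
    sep1, sep2 (k := k) r hxy, sep3 (k := k) r hxy hyz]
  exact ⟨(2 * X ua - 1) * X ua * (X ua - 1), by ring⟩

include hxy hyz in
lemma part1 (D : DP k 3 → DP k 3) (A : Finset (DP k 3))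
    (hA : (↑A : Set (DP k 3)) = {X ua * (X ua - 1), X ua * X ub, (X ua - 1) * X uc}) :
    (1 : DP k 3) ∈ sat (diffIdeal1 D ↑A) {Hset r.le A} := by
  obtain ⟨w, hw⟩ := Hset_factor r hxy hyz A hA
  refine ⟨Hset r.le A, Submonoid.subset_closure (Set.mem_singleton _), ?_⟩
  rw [mul_one, hw]
  refine Ideal.mul_mem_left _ _ ?_
  exact mem_diffIdeal1_self D (↑A : Set (DP k 3)) (by rw [hA]; exact Set.mem_insert _ _)

include hxy hyz in
lemma image_A (A : Finset (DP k 3))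
    (hA : (↑A : Set (DP k 3)) = {X ua * (X ua - 1), X ua * X ub, (X ua - 1) * X uc}) :
    (fun f : DP k 3 => leader r.le f) '' ↑A =
      {((0 : Fin 3), (0 : ℕ)), ((1 : Fin 3), (0 : ℕ)), ((2 : Fin 3), (0 : ℕ))} := by
  rw [hA, Set.image_insert_eq, Set.image_insert_eq, Set.image_singleton]
  rw [lead1, lead2 (k := k) r hxy, lead3 (k := k) r hxy hyz]

include hxy hyz in
lemma no_charset_xz (B : Finset (DP k 3))
    (hB : IsCharSet r.le properDeriv (↑(Ideal.span (G1 k)) : Set (DP k 3)) B) :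
    (fun f : DP k 3 => leader r.le f) '' ↑B ≠
      {((0 : Fin 3), (0 : ℕ)), ((1 : Fin 3), (0 : ℕ)), ((2 : Fin 3), (0 : ℕ))} := by
  intro himg
  obtain ⟨hBred, hBsub, hmin⟩ := hB
  have hlead : ∀ g ∈ B, IsLeader r.le g (leader r.le g) := fun g hg =>
    isLeader_leader r.le_trans r.le_total (hBred.1 g hg)
  have hga : ∃ g ∈ B, leader r.le g = ua := by
    have h : (ua : Fin 3 × ℕ) ∈ (fun f : DP k 3 => leader r.le f) '' ↑B := by
      rw [himg]; exact Set.mem_insert _ _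
    obtain ⟨g, hg, he⟩ := h
    exact ⟨g, hg, he⟩
  have hgb : ∃ g ∈ B, leader r.le g = ub := by
    have h : (ub : Fin 3 × ℕ) ∈ (fun f : DP k 3 => leader r.le f) '' ↑B := by
      rw [himg]; exact Set.mem_insert_iff.mpr (Or.inr (Set.mem_insert _ _))
    obtain ⟨g, hg, he⟩ := h
    exact ⟨g, hg, he⟩
  obtain ⟨ga, hgaB, hla⟩ := hga
  obtain ⟨gb, hgbB, hlb⟩ := hgb
  have hgab : ga ≠ gb := by
    rintro rfl
    rw [hla] at hlb
    exact (by decide : ((0 : Fin 3), (0 : ℕ)) ≠ ((1 : Fin 3), (0 : ℕ))) hlb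
  have hvb : ∀ v ∈ gb.vars, v = ua ∨ v = ub := by
    intro v hv
    have hle := (hlead gb hgbB).2 v hv
    rw [hlb] at hle
    have hpd : ¬ properDeriv v ua := by
      have h := (hBred.2 gb hgbB ga hgaB hgab.symm).1 v hv
      rwa [hla] at h
    exact var_classify_b r hxy hyz v hle hpd
  have hua_mem : ua ∈ gb.vars := by
    by_contra hno
    have hz : gb = 0 := by
      refine eq_zero_of_vars_y gb (hBsub hgbB) ?_
      intro u hu
      rcases hvb u hu with rfl | rfl
      · exact absurd hu hno
      · rfl
    have := hBred.1 gb hgbB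
    rw [hz, vars_0] at this
    simp at this
  have hdga : 2 ≤ degreeOf ua ga := by
    have h1 : 1 ≤ degreeOf ua gb := one_le_degreeOf hua_mem
    have h2 := (hBred.2 gb hgbB ga hgaB hgab.symm).2
    rw [hla] at h2
    omega
  obtain ⟨LA, LB', hndA, hndB, hmemA, hmemB, hchA, hchB, hseq⟩ :=
    hmin (xzSet k) (auto_xz r hxy hyz) xzSet_sub
  have hmemB' : ∀ f, f ∈ LB' ↔ f = X ua ∨ f = X uc := by
    intro f; rw [hmemB, mem_xzSet]
  rcases list_pair hndB hmemB' neX_ac with hLB | hLB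
  swap
  · rw [hLB, List.map_cons, List.map_cons, List.map_nil, rankX, rankX] at hchB
    have hk := (List.isChain_cons_cons.mp hchB).1
    rcases hk with hrl | ⟨he, _⟩
    · exact hrl.2 (r.le_antisymm _ _ hrl.1 (le_bot_a r hxy hyz _))
    · exact (by decide : ((2 : Fin 3), (0 : ℕ)) ≠ ((0 : Fin 3), (0 : ℕ))) he
  · rw [hLB, List.map_cons, List.map_cons, List.map_nil, rankX, rankX] at hseq
    cases LA with
    | nil => exact List.not_mem_nil ((hmemA ga).mpr hgaB)
    | cons q1 t =>
      rw [List.map_cons] at hseq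
      have hq1B : q1 ∈ B := (hmemA q1).mp (by simp)
      have hrk2 : (rankOf r.le q1).2 = degreeOf (leader r.le q1) q1 := rfl
      have hrk1 : (rankOf r.le q1).1 = leader r.le q1 := rfl
      have hq1r : rankOf r.le q1 = ((ua : Fin 3 × ℕ), 1) := by
        rcases hseq with hlt | heq
        · rcases hlt with hk | ⟨he, _⟩
          · exfalso
            rcases hk with hrl | ⟨he2, hd2⟩
            · rw [hrk1] at hrl
              exact hrl.2 (r.le_antisymm _ _ hrl.1 (le_bot_a r hxy hyz _))
            · have hd1 := one_le_degreeOf (hlead q1 hq1B).1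
              rw [hrk2] at hd2
              omega
          · exact he
        · injection heq
      have hq1lead : leader r.le q1 = ua := by
        have h := congrArg Prod.fst hq1r
        rwa [hrk1] at h
      have hq1ga : q1 = ga := by
        by_contra hne
        exact leaders_distinct r hBred q1 hq1B ga hgaB hne (hq1lead.trans hla.symm)
      have hdeg1 : degreeOf ua ga = 1 := by
        have h := congrArg Prod.snd hq1r
        rw [hrk2, hq1lead, hq1ga] at h
        exact h
      omega

include hxy hyz in
lemma no_charset_xy (B : Finset (DP k 3))
    (hB : IsCharSet r.le properDeriv (↑(Ideal.span (G2 k)) : Set (DP k 3)) B) :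
    (fun f : DP k 3 => leader r.le f) '' ↑B ≠
      {((0 : Fin 3), (0 : ℕ)), ((1 : Fin 3), (0 : ℕ)), ((2 : Fin 3), (0 : ℕ))} := by
  classical
  intro himg
  obtain ⟨hBred, hBsub, hmin⟩ := hB
  have hlead : ∀ g ∈ B, IsLeader r.le g (leader r.le g) := fun g hg =>
    isLeader_leader r.le_trans r.le_total (hBred.1 g hg)
  have himgmem : ∀ g ∈ B, leader r.le g = ua ∨ leader r.le g = ub ∨ leader r.le g = uc := by
    intro g hg
    have h : leader r.le g ∈ (fun f : DP k 3 => leader r.le f) '' ↑B :=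
      Set.mem_image_of_mem _ hg
    rw [himg] at h
    simpa using h
  have hget : ∀ u : Fin 3 × ℕ, u ∈ ({ua, ub, uc} : Set (Fin 3 × ℕ)) →
      ∃ g ∈ B, leader r.le g = u := by
    intro u hu
    have h : u ∈ (fun f : DP k 3 => leader r.le f) '' ↑B := by rw [himg]; exact hu
    obtain ⟨g, hg, he⟩ := h
    exact ⟨g, hg, he⟩
  obtain ⟨ga, hgaB, hla⟩ := hget ua (Set.mem_insert _ _)
  obtain ⟨gb, hgbB, hlb⟩ := hget ub (Set.mem_insert_iff.mpr (Or.inr (Set.mem_insert _ _)))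
  obtain ⟨gc, hgcB, hlc⟩ := hget uc
    (Set.mem_insert_iff.mpr (Or.inr (Set.mem_insert_iff.mpr (Or.inr rfl))))
  have hgab : ga ≠ gb := by
    rintro rfl; rw [hla] at hlb
    exact (by decide : ((0 : Fin 3), (0 : ℕ)) ≠ ((1 : Fin 3), (0 : ℕ))) hlb
  have hgac : ga ≠ gc := by
    rintro rfl; rw [hla] at hlc
    exact (by decide : ((0 : Fin 3), (0 : ℕ)) ≠ ((2 : Fin 3), (0 : ℕ))) hlc
  have hgbc : gb ≠ gc := by
    rintro rfl; rw [hlb] at hlc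
    exact (by decide : ((1 : Fin 3), (0 : ℕ)) ≠ ((2 : Fin 3), (0 : ℕ))) hlc
  obtain ⟨LA, LB', hndA, hndB, hmemA, hmemB, hchA, hchB, hseq⟩ :=
    hmin (xySet k) (auto_xy r hxy hyz) xySet_sub
  -- LA has at least 3 elements
  have htfin : LA.toFinset = B := by
    ext f; rw [List.mem_toFinset, hmemA]
  have hcard : 3 ≤ LA.length := by
    have hsub : ({ga, gb, gc} : Finset (DP k 3)) ⊆ B := by
      intro f hf
      simp only [Finset.mem_insert, Finset.mem_singleton] at hf
      rcases hf with rfl | rfl | rfl <;> assumption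
    have hc3 : ({ga, gb, gc} : Finset (DP k 3)).card = 3 := by
      rw [Finset.card_insert_of_notMem (by simp [hgab, hgac]),
        Finset.card_insert_of_notMem (by simp [hgbc]), Finset.card_singleton]
    calc 3 = ({ga, gb, gc} : Finset (DP k 3)).card := hc3.symm
      _ ≤ B.card := Finset.card_le_card hsub
      _ = LA.toFinset.card := by rw [htfin]
      _ = LA.length := List.toFinset_card_of_nodup hndA
  have hmemB' : ∀ f, f ∈ LB' ↔ f = X ua - 1 ∨ f = X ub := by
    intro f; rw [hmemB, mem_xySet]
  rcases list_pair hndB hmemB' neX_4b with hLB | hLB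
  swap
  · rw [hLB, List.map_cons, List.map_cons, List.map_nil, rankX, rank4] at hchB
    have hk := (List.isChain_cons_cons.mp hchB).1
    rcases hk with hrl | ⟨he, _⟩
    · exact hrl.2 (r.le_antisymm _ _ hrl.1 (le_bot_a r hxy hyz _))
    · exact (by decide : ((1 : Fin 3), (0 : ℕ)) ≠ ((0 : Fin 3), (0 : ℕ))) he
  · rw [hLB, List.map_cons, List.map_cons, List.map_nil, rank4, rankX] at hseq
    rcases LA with _ | ⟨q1, _ | ⟨q2, t2⟩⟩
    · simp at hcard
    · simp at hcard
    · rw [List.map_cons, List.map_cons] at hseq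
      have hq1B : q1 ∈ B := (hmemA q1).mp (by simp)
      have hq2B : q2 ∈ B := (hmemA q2).mp (by simp)
      have hq12 : q1 ≠ q2 := by
        have h := List.nodup_cons.mp hndA
        exact fun h' => h.1 (h' ▸ List.mem_cons_self)
      have hrk1a : (rankOf r.le q1).1 = leader r.le q1 := rfl
      have hrk1b : (rankOf r.le q1).2 = degreeOf (leader r.le q1) q1 := rfl
      have hrk2a : (rankOf r.le q2).1 = leader r.le q2 := rfl
      have hrk2b : (rankOf r.le q2).2 = degreeOf (leader r.le q2) q2 := rfl
      -- step 1 : rank q1 = (ua, 1) and the tail comparison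
      have hstep : rankOf r.le q1 = ((ua : Fin 3 × ℕ), 1) ∧
          seqLt r.le (rankOf r.le q2 :: List.map (rankOf r.le) t2)
            [((ub : Fin 3 × ℕ), 1)] := by
        rcases hseq with hlt | heq
        · rcases hlt with hk | ⟨he, hrest⟩
          · exfalso
            rcases hk with hrl | ⟨he2, hd2⟩
            · rw [hrk1a] at hrl
              exact hrl.2 (r.le_antisymm _ _ hrl.1 (le_bot_a r hxy hyz _))
            · have hd1 := one_le_degreeOf (hlead q1 hq1B).1
              rw [hrk1b] at hd2
              omega
          · exact ⟨he, hrest⟩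
        · exfalso
          have hlen := congrArg List.length heq
          simp only [List.length_cons, List.length_map, List.length_nil] at hlen hcard
          omega
      obtain ⟨hq1r, hseq2⟩ := hstep
      have hq1lead : leader r.le q1 = ua := by
        have h := congrArg Prod.fst hq1r; rwa [hrk1a] at h
      have hq1ga : q1 = ga := by
        by_contra hne
        exact leaders_distinct r hBred q1 hq1B ga hgaB hne (hq1lead.trans hla.symm)
      have hdeg1 : degreeOf ua ga = 1 := by
        have h := congrArg Prod.snd hq1r
        rw [hrk1b, hq1lead, hq1ga] at h
        exact h
      -- step 2 : rank q2 = (ub, 1)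
      have hq2r : rankOf r.le q2 = ((ub : Fin 3 × ℕ), 1) := by
        rcases hseq2 with hk | ⟨he, _⟩
        · exfalso
          rcases hk with hrl | ⟨he2, hd2⟩
          · rw [hrk2a] at hrl
            rcases himgmem q2 hq2B with h | h | h
            · exact leaders_distinct r hBred q1 hq1B q2 hq2B hq12 (hq1lead.trans h.symm)
            · rw [h] at hrl
              exact hrl.2 rfl
            · rw [h] at hrl
              have hba : r.le ub uc := hyz.1
              exact hyz.2 (r.le_antisymm _ _ hba hrl.1)
          · have hd1 := one_le_degreeOf (hlead q2 hq2B).1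
            rw [hrk2b] at hd2
            omega
        · exact he
      have hq2lead : leader r.le q2 = ub := by
        have h := congrArg Prod.fst hq2r; rwa [hrk2a] at h
      have hq2gb : q2 = gb := by
        by_contra hne
        exact leaders_distinct r hBred q2 hq2B gb hgbB hne (hq2lead.trans hlb.symm)
      have hdeg2 : degreeOf ub gb = 1 := by
        have h := congrArg Prod.snd hq2r
        rw [hrk2b, hq2lead, hq2gb] at h
        exact h
      -- step 3 : contradiction via gc
      have hdca : degreeOf ua gc = 0 := by
        have h := (hBred.2 gc hgcB ga hgaB hgac.symm).2
        rw [hla, hdeg1] at h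
        omega
      have hdcb : degreeOf ub gc = 0 := by
        have h := (hBred.2 gc hgcB gb hgbB hgbc.symm).2
        rw [hlb, hdeg2] at h
        omega
      have hvc : ∀ v ∈ gc.vars, v.1 = 2 := by
        intro v hv
        have hle := (hlead gc hgcB).2 v hv
        rw [hlc] at hle
        have hpda : ¬ properDeriv v ua := by
          have h := (hBred.2 gc hgcB ga hgaB hgac.symm).1 v hv
          rwa [hla] at h
        have hpdb : ¬ properDeriv v ub := by
          have h := (hBred.2 gc hgcB gb hgbB hgbc.symm).1 v hv
          rwa [hlb] at h
        rcases var_classify_c r hxy hyz v hle hpda hpdb with rfl | rfl | rfl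
        · exact absurd hv (not_mem_vars_of_degreeOf_eq_zero hdca)
        · exact absurd hv (not_mem_vars_of_degreeOf_eq_zero hdcb)
        · rfl
      have hz : gc = 0 := eq_zero_of_vars_z gc (hBsub hgcB) hvc
      have hne := hBred.1 gc hgcB
      rw [hz, vars_0] at hne
      simp at hne

end Final

/-- In `k{x,y,z}` let `A = {x(x−1), xy, (x−1)z}` and fix a ranking with `x < y < z`.  Then
(1) `1 ∈ [A]:H_A^∞`; (2) `{A} = [x, z] ∩ [x−1, y]` is a minimal prime decomposition;
(3) `A` is a characteristic set of `{A}` with set of leaders `{x, y, z}`, which is not the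
set of leaders of a characteristic set of either single minimal prime component. -/
theorem statement11 {k : Type*} [Field k] [CharZero k]
    (δ : k → k) (hδ : IsFieldDeriv δ)
    (D : DP k 3 → DP k 3) (hD : IsDeriv δ D)
    (x y z : DP k 3) (hx : x = X ((0 : Fin 3), (0 : ℕ)))
    (hy : y = X ((1 : Fin 3), (0 : ℕ))) (hz : z = X ((2 : Fin 3), (0 : ℕ)))
    (A : Finset (DP k 3)) (hA : (↑A : Set (DP k 3)) = {x * (x - 1), x * y, (x - 1) * z})
    (r : Ranking 3)
    (hxy : rlt r.le ((0 : Fin 3), (0 : ℕ)) ((1 : Fin 3), (0 : ℕ)))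
    (hyz : rlt r.le ((1 : Fin 3), (0 : ℕ)) ((2 : Fin 3), (0 : ℕ))) :
    -- (1)
    (1 : DP k 3) ∈ sat (diffIdeal1 D ↑A) {Hset r.le A} ∧
    -- (2): minimal prime decomposition
    (diffIdeal1 D {x, z}).IsPrime ∧ (diffIdeal1 D {x - 1, y}).IsPrime ∧
    radDiffIdeal1 D ↑A = diffIdeal1 D {x, z} ⊓ diffIdeal1 D {x - 1, y} ∧
    ¬ diffIdeal1 D {x, z} ≤ diffIdeal1 D {x - 1, y} ∧
    ¬ diffIdeal1 D {x - 1, y} ≤ diffIdeal1 D {x, z} ∧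
    -- (3)
    IsCharSet r.le properDeriv (radDiffIdeal1 D ↑A : Set (DP k 3)) A ∧
    (fun f : DP k 3 => leader r.le f) '' (↑A : Set (DP k 3)) =
      {((0 : Fin 3), (0 : ℕ)), ((1 : Fin 3), (0 : ℕ)), ((2 : Fin 3), (0 : ℕ))} ∧
    (∀ B : Finset (DP k 3),
      IsCharSet r.le properDeriv (diffIdeal1 D {x, z} : Set (DP k 3)) B →
      (fun f : DP k 3 => leader r.le f) '' (↑B : Set (DP k 3)) ≠
        {((0 : Fin 3), (0 : ℕ)), ((1 : Fin 3), (0 : ℕ)), ((2 : Fin 3), (0 : ℕ))}) ∧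
    (∀ B : Finset (DP k 3),
      IsCharSet r.le properDeriv (diffIdeal1 D {x - 1, y} : Set (DP k 3)) B →
      (fun f : DP k 3 => leader r.le f) '' (↑B : Set (DP k 3)) ≠
        {((0 : Fin 3), (0 : ℕ)), ((1 : Fin 3), (0 : ℕ)), ((2 : Fin 3), (0 : ℕ))}) := by
  subst hx hy hz
  have hI1 := diffIdeal1_xz (k := k) hD
  have hI2 := diffIdeal1_xy (k := k) hD
  have hdec : radDiffIdeal1 D ↑A = Ideal.span (G1 k) ⊓ Ideal.span (G2 k) := by
    rw [hA]; exact radDecomp hD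
  refine ⟨?_, ?_, ?_, ?_, ?_, ?_, ?_, ?_, ?_, ?_⟩
  · exact part1 r hxy hyz D A hA
  · rw [hI1]; exact span_G1_prime
  · rw [hI2]; exact span_G2_prime
  · rw [hI1, hI2, hdec]
  · rw [hI1, hI2]
    intro hle
    exact z_not_mem_G2 (hle z_mem_G1)
  · rw [hI1, hI2]
    intro hle
    exact y_not_mem_G1 (hle y_mem_G2)
  · refine ⟨autoA r hxy hyz A hA, ?_, ?_⟩
    · intro f hf
      rw [SetLike.mem_coe, radDiffIdeal1, radDiffIdeal, Submodule.mem_sInf]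
      rintro J ⟨hJF, _, _⟩
      exact hJF hf
    · intro B hBred hBsub
      refine A_setRankLe r hxy hyz A hA B hBred ?_
      intro g hg
      have hm := hBsub hg
      rw [SetLike.mem_coe, hdec, Submodule.mem_inf] at hm
      exact hm
  · exact image_A r hxy hyz A hA
  · intro B hB
    rw [hI1] at hB
    exact no_charset_xz r hxy hyz B hB
  · intro B hB
    rw [hI2] at hB
    exact no_charset_xy r hxy hyz B hB

end DiffAlg
end

section
/- Let k = ℚ(t) be the differential field of rational functions with derivation δ determined by δ(t) = 1, and consider the ordinary differential polynomial ring ℚ(t){x,y,z} (writing x' = δx, etc.). Then the radical differential ideal I = {(x−t)x', x'y', (x−t)(z'+y')} admits the decomposition I = [x−t, y'] ∩ [x', z'+y']. -/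
open MvPolynomial

namespace DiffAlg

-- ### auxiliary lemmas
section P12

variable {R : Type*} [CommRing R] {D : R → R}

section withHyps
variable (hadd : ∀ f g : R, D (f + g) = D f + D g)
  (hmul : ∀ f g : R, D (f * g) = f * D g + g * D f)

include hmul in
lemma D_zero' : D 0 = 0 := by simpa using hmul 0 0

include hadd hmul in
lemma D_neg' (f : R) : D (-f) = - D f := by
  have h := hadd f (-f)
  rw [add_neg_cancel, D_zero' hmul] at h
  exact (eq_neg_of_add_eq_zero_right h.symm)

include hadd hmul in
lemma D_sub' (f g : R) : D (f - g) = D f - D g := by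
  rw [sub_eq_add_neg, hadd, D_neg' hadd hmul, sub_eq_add_neg]

include hmul in
lemma D_one' : D (1 : R) = 0 := by
  have h := hmul 1 1
  simp only [one_mul] at h
  exact (right_eq_add.mp h)

include hmul in
lemma ritt {I : Ideal R} (hrad : I.IsRadical) (hdiff : ∀ f ∈ I, D f ∈ I)
    {a b : R} (hab : a * b ∈ I) : a * D b ∈ I := by
  have h1 : D (a * b) ∈ I := hdiff _ hab
  have h2 : (a * D b) ^ 2 = (a * D b) * D (a * b) - (a * b) * (D a * D b) := by
    rw [hmul]; ring
  have h3 : (a * D b) ^ 2 ∈ I := by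
    rw [h2]; exact I.sub_mem (I.mul_mem_left _ h1) (I.mul_mem_right _ hab)
  exact hrad ⟨2, h3⟩

include hmul in
lemma ritt_right {I : Ideal R} (hrad : I.IsRadical) (hdiff : ∀ f ∈ I, D f ∈ I)
    {a b : R} (hab : a * b ∈ I) (q : ℕ) : a * D^[q] b ∈ I := by
  induction q with
  | zero => simpa using hab
  | succ q ih =>
    rw [Function.iterate_succ_apply']
    exact ritt hmul hrad hdiff ih

include hmul in
lemma ritt_iter {I : Ideal R} (hrad : I.IsRadical) (hdiff : ∀ f ∈ I, D f ∈ I)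
    {a b : R} (hab : a * b ∈ I) (p q : ℕ) : D^[p] a * D^[q] b ∈ I := by
  induction p generalizing q with
  | zero => simpa using ritt_right hmul hrad hdiff hab q
  | succ p ih =>
    rw [Function.iterate_succ_apply']
    rw [mul_comm]
    exact ritt hmul hrad hdiff (mul_comm (D^[p] a) (D^[q] b) ▸ ih q)

end withHyps

/-- all iterated derivatives of elements of `F`. -/
def dSet (D : R → R) (F : Set R) : Set R := {g | ∃ f ∈ F, ∃ p : ℕ, g = D^[p] f}

lemma subset_dSet (D : R → R) (F : Set R) : F ⊆ dSet D F := fun f hf => ⟨f, hf, 0, rfl⟩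

section withHyps2
variable (hadd : ∀ f g : R, D (f + g) = D f + D g)
  (hmul : ∀ f g : R, D (f * g) = f * D g + g * D f)

include hadd hmul in
lemma isDiff_span_dSet (F : Set R) :
    ∀ f ∈ Ideal.span (dSet D F), D f ∈ Ideal.span (dSet D F) := by
  intro f hf
  induction hf using Submodule.span_induction with
  | mem x h =>
    obtain ⟨g, hg, p, rfl⟩ := h
    exact Ideal.subset_span ⟨g, hg, p + 1, (Function.iterate_succ_apply' D p g).symm⟩
  | zero => rw [D_zero' hmul]; exact Ideal.zero_mem _
  | add x y hx hy ihx ihy => rw [hadd]; exact Ideal.add_mem _ ihx ihy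
  | smul a x hx ih =>
    rw [smul_eq_mul, hmul]
    exact Ideal.add_mem _ (Ideal.mul_mem_left _ _ ih) (Ideal.mul_mem_right _ _ hx)

include hadd hmul in
lemma diffIdeal1_eq_span_s12 (F : Set R) : diffIdeal1 D F = Ideal.span (dSet D F) := by
  apply le_antisymm
  · exact sInf_le ⟨fun f hf => Ideal.subset_span (subset_dSet D F hf),
      fun _ => isDiff_span_dSet hadd hmul F⟩
  · rw [Ideal.span_le]
    rintro g ⟨f, hf, p, rfl⟩
    rw [SetLike.mem_coe, diffIdeal1, diffIdeal, Submodule.mem_sInf]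
    rintro I ⟨hFI, hDI⟩
    induction p with
    | zero => simpa using hFI hf
    | succ p ih =>
      rw [Function.iterate_succ_apply']
      exact hDI () _ ih

end withHyps2
end P12

noncomputable def v1 : Fin 3 × ℕ → DP (RatFunc ℚ) 3 := fun u =>
  if u.1 = 0 then (if u.2 = 0 then C RatFunc.X else if u.2 = 1 then 1 else 0)
  else if u.1 = 1 then (if u.2 = 0 then X u else 0) else X u

noncomputable def v2 : Fin 3 × ℕ → DP (RatFunc ℚ) 3 := fun u =>
  if u.1 = 0 then (if u.2 = 0 then X u else 0)
  else if u.1 = 2 then (if u.2 = 0 then X u else - X (1, u.2)) else X u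


/-- Over `ℚ(t)` with `δ t = 1`, in `ℚ(t){x,y,z}` the radical differential ideal
`{(x−t)x', x'y', (x−t)(z'+y')}` equals `[x−t, y'] ∩ [x', z'+y']`. -/
theorem statement12
    (δ : RatFunc ℚ → RatFunc ℚ) (hδ : IsFieldDeriv δ) (hδt : δ RatFunc.X = 1)
    (D : DP (RatFunc ℚ) 3 → DP (RatFunc ℚ) 3) (hD : IsDeriv δ D)
    (x x' y' z' : DP (RatFunc ℚ) 3)
    (hx : x = X ((0 : Fin 3), (0 : ℕ))) (hx' : x' = X ((0 : Fin 3), (1 : ℕ)))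
    (hy' : y' = X ((1 : Fin 3), (1 : ℕ))) (hz' : z' = X ((2 : Fin 3), (1 : ℕ)))
    (t : DP (RatFunc ℚ) 3) (ht : t = C RatFunc.X) :
    radDiffIdeal1 D {(x - t) * x', x' * y', (x - t) * (z' + y')} =
      diffIdeal1 D {x - t, y'} ⊓ diffIdeal1 D {x', z' + y'} := by
  subst hx hx' hy' hz' ht
  have hadd := hD.map_add
  have hmul := hD.leibniz
  have hδ1 : δ 1 = 0 := by
    have h := hδ.leibniz 1 1
    simp only [one_mul] at h
    exact (right_eq_add.mp h)
  have hD1 : D (1 : DP (RatFunc ℚ) 3) = 0 := by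
    rw [← C_1, hD.map_C, hδ1, map_zero]
  have hDt : D (C RatFunc.X : DP (RatFunc ℚ) 3) = 1 := by
    rw [hD.map_C, hδt, C_1]
  have iter_X : ∀ (u : Fin 3 × ℕ) (p : ℕ), D^[p] (X u) = X (u.1, u.2 + p) := by
    intro u p
    induction p with
    | zero => simp
    | succ p ih => rw [Function.iterate_succ_apply', ih, hD.map_X]; ring_nf
  have iter_add : ∀ (f g : DP (RatFunc ℚ) 3) (p : ℕ), D^[p] (f + g) = D^[p] f + D^[p] g := by
    intro f g p
    induction p with
    | zero => simp
    | succ p ih => rw [Function.iterate_succ_apply', ih, hadd,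
        Function.iterate_succ_apply', Function.iterate_succ_apply']
  set g1 : DP (RatFunc ℚ) 3 := X ((0:Fin 3), (0:ℕ)) - C RatFunc.X with hg1def
  have hDg1 : D g1 = X ((0:Fin 3), (1:ℕ)) - 1 := by
    rw [hg1def, D_sub' hadd hmul, hD.map_X, hDt]
  have hDg1' : D (X ((0:Fin 3), (1:ℕ)) - 1) = X ((0:Fin 3), (2:ℕ)) := by
    rw [D_sub' hadd hmul, hD.map_X, hD1, sub_zero]
  have iter_g1 : ∀ p : ℕ, D^[p+2] g1 = X ((0:Fin 3), p+2) := by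
    intro p
    rw [Function.iterate_succ_apply, Function.iterate_succ_apply, hDg1, hDg1', iter_X]
    norm_num [add_comm]
  -- membership facts in S1
  have m_g1 : g1 ∈ dSet D {g1, X ((1:Fin 3),(1:ℕ))} :=
    subset_dSet _ _ (Set.mem_insert _ _)
  have m_x1' : X ((0:Fin 3),(1:ℕ)) - 1 ∈ dSet D {g1, X ((1:Fin 3),(1:ℕ))} :=
    ⟨g1, Set.mem_insert _ _, 1, by rw [Function.iterate_one, hDg1]⟩
  have m_x0 : ∀ n : ℕ, X ((0:Fin 3), n+2) ∈ dSet D {g1, X ((1:Fin 3),(1:ℕ))} :=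
    fun n => ⟨g1, Set.mem_insert _ _, n+2, (iter_g1 n).symm⟩
  have m_y : ∀ n : ℕ, X ((1:Fin 3), n+1) ∈ dSet D {g1, X ((1:Fin 3),(1:ℕ))} :=
    fun n => ⟨X ((1:Fin 3),(1:ℕ)), Set.mem_insert_of_mem _ rfl, n, by
      rw [iter_X]; norm_num [Nat.add_comm]⟩
  -- membership facts in S2
  have m_x : ∀ n : ℕ, X ((0:Fin 3), n+1)
      ∈ dSet D {X ((0:Fin 3),(1:ℕ)), X ((2:Fin 3),(1:ℕ)) + X ((1:Fin 3),(1:ℕ))} :=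
    fun n => ⟨X ((0:Fin 3),(1:ℕ)), Set.mem_insert _ _, n, by
      rw [iter_X]; norm_num [Nat.add_comm]⟩
  have m_zy : ∀ n : ℕ, X ((2:Fin 3), n+1) + X ((1:Fin 3), n+1)
      ∈ dSet D {X ((0:Fin 3),(1:ℕ)), X ((2:Fin 3),(1:ℕ)) + X ((1:Fin 3),(1:ℕ))} :=
    fun n => ⟨X ((2:Fin 3),(1:ℕ)) + X ((1:Fin 3),(1:ℕ)), Set.mem_insert_of_mem _ rfl, n, by
      rw [iter_add, iter_X, iter_X]; norm_num [Nat.add_comm]⟩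
  -- S1 = kernel of aeval v1
  have ev1 : ∀ g ∈ dSet D {g1, X ((1:Fin 3),(1:ℕ))},
      aeval v1 g = 0 := by
    rintro g ⟨f, hf, p, rfl⟩
    simp only [Set.mem_insert_iff, Set.mem_singleton_iff] at hf
    rcases hf with rfl | rfl
    · rcases p with _ | _ | p
      · rw [Function.iterate_zero_apply, hg1def]
        simp [v1]
      · rw [Function.iterate_one, hDg1]
        simp [v1]
      · rw [iter_g1]
        norm_num [v1, Fin.ext_iff]
        omega
    · rw [iter_X]
      norm_num [v1, Fin.ext_iff]
  have key1 : ∀ u : Fin 3 × ℕ,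
      X u - v1 u ∈ Ideal.span (dSet D {g1, X ((1:Fin 3),(1:ℕ))}) := by
    rintro ⟨i, n⟩
    fin_cases i
    · rcases n with _ | _ | n
      · have h : v1 ((0:Fin 3), 0) = C RatFunc.X := by norm_num [v1, Fin.ext_iff]
        rw [show ((⟨0, by norm_num⟩ : Fin 3), 0) = ((0:Fin 3), 0) from rfl, h]
        exact Ideal.subset_span m_g1
      · have h : v1 ((0:Fin 3), 1) = 1 := by norm_num [v1, Fin.ext_iff]
        rw [show ((⟨0, by norm_num⟩ : Fin 3), 1) = ((0:Fin 3), 1) from rfl, h]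
        exact Ideal.subset_span m_x1'
      · have h : v1 ((0:Fin 3), n+2) = 0 := by norm_num [v1, Fin.ext_iff]; omega
        rw [show ((⟨0, by norm_num⟩ : Fin 3), n+2) = ((0:Fin 3), n+2) from rfl, h, sub_zero]
        exact Ideal.subset_span (m_x0 n)
    · rcases n with _ | n
      · have h : v1 ((1:Fin 3), 0) = X ((1:Fin 3), 0) := by norm_num [v1, Fin.ext_iff]
        rw [show ((⟨1, by norm_num⟩ : Fin 3), 0) = ((1:Fin 3), 0) from rfl, h, sub_self]
        exact Ideal.zero_mem _
      · have h : v1 ((1:Fin 3), n+1) = 0 := by norm_num [v1, Fin.ext_iff]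
        rw [show ((⟨1, by norm_num⟩ : Fin 3), n+1) = ((1:Fin 3), n+1) from rfl, h, sub_zero]
        exact Ideal.subset_span (m_y n)
    · have h : v1 ((2:Fin 3), n) = X ((2:Fin 3), n) := by norm_num [v1, Fin.ext_iff]
      rw [show ((⟨2, by norm_num⟩ : Fin 3), n) = ((2:Fin 3), n) from rfl, h, sub_self]
      exact Ideal.zero_mem _
  have eker1 : Ideal.span (dSet D {g1, X ((1:Fin 3),(1:ℕ))}) =
      RingHom.ker (aeval v1 : DP (RatFunc ℚ) 3 →ₐ[RatFunc ℚ] DP (RatFunc ℚ) 3) := by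
    apply le_antisymm
    · rw [Ideal.span_le]
      intro g hg
      rw [SetLike.mem_coe, RingHom.mem_ker]
      exact ev1 g hg
    · intro f hf
      rw [RingHom.mem_ker] at hf
      have hcomp : (Ideal.Quotient.mkₐ (RatFunc ℚ)
            (Ideal.span (dSet D {g1, X ((1:Fin 3),(1:ℕ))}))).comp (aeval v1) =
          Ideal.Quotient.mkₐ (RatFunc ℚ)
            (Ideal.span (dSet D {g1, X ((1:Fin 3),(1:ℕ))})) := by
        apply MvPolynomial.algHom_ext
        intro u
        simp only [AlgHom.comp_apply, aeval_X, Ideal.Quotient.mkₐ_eq_mk]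
        rw [Ideal.Quotient.eq]
        have hmem := (Ideal.span (dSet D {g1, X ((1:Fin 3),(1:ℕ))})).neg_mem (key1 u)
        rwa [neg_sub] at hmem
      have h2 := congrArg (fun g => g f) hcomp
      simp only [AlgHom.comp_apply, hf, map_zero, Ideal.Quotient.mkₐ_eq_mk] at h2
      exact (Ideal.Quotient.eq_zero_iff_mem).mp h2.symm
  have hrad1 : (Ideal.span (dSet D {g1, X ((1:Fin 3),(1:ℕ))})).IsRadical := by
    rw [eker1]; exact (RingHom.ker_isPrime _).isRadical
  -- S2 = kernel of aeval v2
  have ev2 : ∀ g ∈ dSet D {X ((0:Fin 3),(1:ℕ)), X ((2:Fin 3),(1:ℕ)) + X ((1:Fin 3),(1:ℕ))},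
      aeval v2 g = 0 := by
    rintro g ⟨f, hf, p, rfl⟩
    simp only [Set.mem_insert_iff, Set.mem_singleton_iff] at hf
    rcases hf with rfl | rfl
    · rw [iter_X]
      norm_num [v2, Fin.ext_iff]
    · rw [iter_add, iter_X, iter_X]
      norm_num [v2, Fin.ext_iff]
  have key2 : ∀ u : Fin 3 × ℕ, X u - v2 u
      ∈ Ideal.span (dSet D {X ((0:Fin 3),(1:ℕ)), X ((2:Fin 3),(1:ℕ)) + X ((1:Fin 3),(1:ℕ))}) := by
    rintro ⟨i, n⟩
    fin_cases i
    · rcases n with _ | n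
      · have h : v2 ((0:Fin 3), 0) = X ((0:Fin 3), 0) := by norm_num [v2, Fin.ext_iff]
        rw [show ((⟨0, by norm_num⟩ : Fin 3), 0) = ((0:Fin 3), 0) from rfl, h, sub_self]
        exact Ideal.zero_mem _
      · have h : v2 ((0:Fin 3), n+1) = 0 := by norm_num [v2, Fin.ext_iff]
        rw [show ((⟨0, by norm_num⟩ : Fin 3), n+1) = ((0:Fin 3), n+1) from rfl, h, sub_zero]
        exact Ideal.subset_span (m_x n)
    · have h : v2 ((1:Fin 3), n) = X ((1:Fin 3), n) := by norm_num [v2, Fin.ext_iff]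
      rw [show ((⟨1, by norm_num⟩ : Fin 3), n) = ((1:Fin 3), n) from rfl, h, sub_self]
      exact Ideal.zero_mem _
    · rcases n with _ | n
      · have h : v2 ((2:Fin 3), 0) = X ((2:Fin 3), 0) := by norm_num [v2, Fin.ext_iff]
        rw [show ((⟨2, by norm_num⟩ : Fin 3), 0) = ((2:Fin 3), 0) from rfl, h, sub_self]
        exact Ideal.zero_mem _
      · have h : v2 ((2:Fin 3), n+1) = - X ((1:Fin 3), n+1) := by norm_num [v2, Fin.ext_iff]
        rw [show ((⟨2, by norm_num⟩ : Fin 3), n+1) = ((2:Fin 3), n+1) from rfl, h, sub_neg_eq_add]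
        exact Ideal.subset_span (m_zy n)
  have eker2 : Ideal.span (dSet D {X ((0:Fin 3),(1:ℕ)), X ((2:Fin 3),(1:ℕ)) + X ((1:Fin 3),(1:ℕ))}) =
      RingHom.ker (aeval v2 : DP (RatFunc ℚ) 3 →ₐ[RatFunc ℚ] DP (RatFunc ℚ) 3) := by
    apply le_antisymm
    · rw [Ideal.span_le]
      intro g hg
      rw [SetLike.mem_coe, RingHom.mem_ker]
      exact ev2 g hg
    · intro f hf
      rw [RingHom.mem_ker] at hf
      have hcomp : (Ideal.Quotient.mkₐ (RatFunc ℚ)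
            (Ideal.span (dSet D {X ((0:Fin 3),(1:ℕ)), X ((2:Fin 3),(1:ℕ)) + X ((1:Fin 3),(1:ℕ))}))).comp (aeval v2) =
          Ideal.Quotient.mkₐ (RatFunc ℚ)
            (Ideal.span (dSet D {X ((0:Fin 3),(1:ℕ)), X ((2:Fin 3),(1:ℕ)) + X ((1:Fin 3),(1:ℕ))})) := by
        apply MvPolynomial.algHom_ext
        intro u
        simp only [AlgHom.comp_apply, aeval_X, Ideal.Quotient.mkₐ_eq_mk]
        rw [Ideal.Quotient.eq]
        have hmem := (Ideal.span (dSet D {X ((0:Fin 3),(1:ℕ)), X ((2:Fin 3),(1:ℕ)) + X ((1:Fin 3),(1:ℕ))})).neg_mem (key2 u)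
        rwa [neg_sub] at hmem
      have h2 := congrArg (fun g => g f) hcomp
      simp only [AlgHom.comp_apply, hf, map_zero, Ideal.Quotient.mkₐ_eq_mk] at h2
      exact (Ideal.Quotient.eq_zero_iff_mem).mp h2.symm
  have hrad2 : (Ideal.span (dSet D {X ((0:Fin 3),(1:ℕ)), X ((2:Fin 3),(1:ℕ)) + X ((1:Fin 3),(1:ℕ))})).IsRadical := by
    rw [eker2]; exact (RingHom.ker_isPrime _).isRadical
  have m_x1 : X ((0:Fin 3),(1:ℕ))
      ∈ dSet D {X ((0:Fin 3),(1:ℕ)), X ((2:Fin 3),(1:ℕ)) + X ((1:Fin 3),(1:ℕ))} :=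
    subset_dSet _ _ (Set.mem_insert _ _)
  have m_zy1 : X ((2:Fin 3),(1:ℕ)) + X ((1:Fin 3),(1:ℕ))
      ∈ dSet D {X ((0:Fin 3),(1:ℕ)), X ((2:Fin 3),(1:ℕ)) + X ((1:Fin 3),(1:ℕ))} :=
    subset_dSet _ _ (Set.mem_insert_of_mem _ rfl)
  have m_y1 : X ((1:Fin 3),(1:ℕ)) ∈ dSet D {g1, X ((1:Fin 3),(1:ℕ))} :=
    subset_dSet _ _ (Set.mem_insert_of_mem _ rfl)
  have eJ1 := diffIdeal1_eq_span_s12 hadd hmul {g1, X ((1:Fin 3),(1:ℕ))}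
  have eJ2 := diffIdeal1_eq_span_s12 hadd hmul
    {X ((0:Fin 3),(1:ℕ)), X ((2:Fin 3),(1:ℕ)) + X ((1:Fin 3),(1:ℕ))}
  rw [eJ1, eJ2]
  apply le_antisymm
  · apply sInf_le
    refine ⟨?_, ?_, ?_⟩
    · intro f hf
      simp only [Set.mem_insert_iff, Set.mem_singleton_iff] at hf
      rcases hf with rfl | rfl | rfl
      · exact Submodule.mem_inf.mpr ⟨Ideal.mul_mem_right _ _ (Ideal.subset_span m_g1),
          Ideal.mul_mem_left _ _ (Ideal.subset_span m_x1)⟩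
      · exact Submodule.mem_inf.mpr ⟨Ideal.mul_mem_left _ _ (Ideal.subset_span m_y1),
          Ideal.mul_mem_right _ _ (Ideal.subset_span m_x1)⟩
      · exact Submodule.mem_inf.mpr ⟨Ideal.mul_mem_right _ _ (Ideal.subset_span m_g1),
          Ideal.mul_mem_left _ _ (Ideal.subset_span m_zy1)⟩
    · intro j f hf
      obtain ⟨h1, h2⟩ := Submodule.mem_inf.mp hf
      exact Submodule.mem_inf.mpr ⟨isDiff_span_dSet hadd hmul _ _ h1,
        isDiff_span_dSet hadd hmul _ _ h2⟩
    · rintro r ⟨n, hn⟩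
      obtain ⟨h1, h2⟩ := Submodule.mem_inf.mp hn
      exact Submodule.mem_inf.mpr ⟨hrad1 ⟨n, h1⟩, hrad2 ⟨n, h2⟩⟩
  · apply le_sInf
    rintro I ⟨hFI, hdiff, hradI⟩
    intro f hf
    obtain ⟨hf1, hf2⟩ := Submodule.mem_inf.mp hf
    have hA : g1 * X ((0:Fin 3),(1:ℕ)) ∈ I := hFI (Set.mem_insert _ _)
    have hB : X ((0:Fin 3),(1:ℕ)) * X ((1:Fin 3),(1:ℕ)) ∈ I :=
      hFI (Set.mem_insert_of_mem _ (Set.mem_insert _ _))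
    have hC : g1 * (X ((2:Fin 3),(1:ℕ)) + X ((1:Fin 3),(1:ℕ))) ∈ I :=
      hFI (Set.mem_insert_of_mem _ (Set.mem_insert_of_mem _ rfl))
    have hdiff' : ∀ g ∈ I, D g ∈ I := hdiff ()
    have hD2 : (X ((0:Fin 3),(1:ℕ)) - 1) * (X ((2:Fin 3),(1:ℕ)) + X ((1:Fin 3),(1:ℕ))) ∈ I := by
      have h := ritt_iter hmul hradI hdiff' hC 1 0
      rwa [Function.iterate_one, Function.iterate_zero_apply, hDg1] at h
    have hyzy : X ((1:Fin 3),(1:ℕ)) * (X ((2:Fin 3),(1:ℕ)) + X ((1:Fin 3),(1:ℕ))) ∈ I := by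
      have heq : X ((1:Fin 3),(1:ℕ)) * (X ((2:Fin 3),(1:ℕ)) + X ((1:Fin 3),(1:ℕ))) =
          ((0 : DP (RatFunc ℚ) 3) +
          (X ((0:Fin 3),(1:ℕ)) * X ((1:Fin 3),(1:ℕ)))
            * (X ((2:Fin 3),(1:ℕ)) + X ((1:Fin 3),(1:ℕ)))
          - ((X ((0:Fin 3),(1:ℕ)) - 1) * (X ((2:Fin 3),(1:ℕ)) + X ((1:Fin 3),(1:ℕ))))
            * X ((1:Fin 3),(1:ℕ))) := by ring
      rw [heq, zero_add]
      exact I.sub_mem (I.mul_mem_right _ hB) (I.mul_mem_right _ hD2)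
    have hprod : Ideal.span (dSet D {g1, X ((1:Fin 3),(1:ℕ))}) *
        Ideal.span (dSet D {X ((0:Fin 3),(1:ℕ)), X ((2:Fin 3),(1:ℕ)) + X ((1:Fin 3),(1:ℕ))})
        ≤ I := by
      rw [Ideal.span_mul_span, Ideal.span_le]
      intro g hg
      rw [Set.mem_mul] at hg
      obtain ⟨a, ha, b, hb, rfl⟩ := hg
      obtain ⟨a0, ha0, p, rfl⟩ := ha
      obtain ⟨b0, hb0, q, rfl⟩ := hb
      refine ritt_iter hmul hradI hdiff' ?_ p q
      simp only [Set.mem_insert_iff, Set.mem_singleton_iff] at ha0 hb0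
      rcases ha0 with rfl | rfl <;> rcases hb0 with rfl | rfl
      · exact hA
      · exact hC
      · rw [mul_comm]; exact hB
      · exact hyzy
    have hsq : f * f ∈ I := hprod (Ideal.mul_mem_mul hf1 hf2)
    exact hradI ⟨2, by rw [pow_two]; exact hsq⟩


end DiffAlg
end

section
/- Let k = ℚ(t) be the differential field of rational functions with derivation δ determined by δ(t) = 1, and consider the ordinary differential polynomial ring ℚ(t){x,y,z} with an orderly ranking satisfying x < y < z (writing x' = δx, etc.). Then the set C = {(x−t)x', (x−t)(z'+y')} is a characteristic set in Kolchin's sense of the radical differential ideal I = {(x−t)x', x'y', (x−t)(z'+y')}. -/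
open MvPolynomial

namespace DiffAlg

/-! ### Auxiliary development for Statement 13 -/

section Proof13Aux

private lemma fin3_cases (i : Fin 3) : i = 0 ∨ i = 1 ∨ i = 2 := by fin_cases i <;> simp

/-- The substitution `x^{(n+1)} ↦ 0`, `z^{(n+1)} ↦ -y^{(n+1)}`, all other variables fixed. -/
noncomputable def sub13 : Fin 3 × ℕ → DP (RatFunc ℚ) 3 := fun u =>
  if u.2 = 0 then X u else if u.1 = 0 then 0 else if u.1 = 2 then - X (1, u.2) else X u

/-- The "bad" variables: derivatives of positive order of `x` or `z`. -/
def S13 (v : Fin 3 × ℕ) : Prop := (v.1 = 0 ∨ v.1 = 2) ∧ 1 ≤ v.2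

lemma sub13_of_not_S13 {v : Fin 3 × ℕ} (h : ¬ S13 v) : sub13 v = X v := by
  obtain ⟨i, n⟩ := v
  by_cases hn : n = 0
  · simp [sub13, hn]
  · have h1 : ¬ i = 0 := fun e => h ⟨Or.inl e, Nat.one_le_iff_ne_zero.2 hn⟩
    have h2 : ¬ i = 2 := fun e => h ⟨Or.inr e, Nat.one_le_iff_ne_zero.2 hn⟩
    simp [sub13, hn, h1, h2]

lemma sub13_zero {n : ℕ} (hn : n ≠ 0) : sub13 ((0 : Fin 3), n) = 0 := by
  simp [sub13, hn]

lemma sub13_one (n : ℕ) : sub13 ((1 : Fin 3), n) = X ((1 : Fin 3), n) := by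
  apply sub13_of_not_S13
  rintro ⟨h1 | h1, -⟩
  · exact absurd h1 (by decide : ¬ (1 : Fin 3) = 0)
  · exact absurd h1 (by decide : ¬ (1 : Fin 3) = 2)

lemma sub13_two {n : ℕ} (hn : n ≠ 0) : sub13 ((2 : Fin 3), n) = - X ((1 : Fin 3), n) := by
  simp [sub13, hn]

/-- The generators of the prime differential ideal. -/
def G13 : Set (DP (RatFunc ℚ) 3) :=
  {q | (∃ n : ℕ, q = X ((0 : Fin 3), n + 1)) ∨
    ∃ n : ℕ, q = X ((2 : Fin 3), n + 1) + X ((1 : Fin 3), n + 1)}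

noncomputable def P13 : Ideal (DP (RatFunc ℚ) 3) := Ideal.span G13

noncomputable def phi13 : DP (RatFunc ℚ) 3 →ₐ[RatFunc ℚ] DP (RatFunc ℚ) 3 := aeval sub13

lemma phi13_X (v : Fin 3 × ℕ) : phi13 (X v) = sub13 v := aeval_X _ _

lemma phi13_C (a : RatFunc ℚ) : phi13 (C a) = C a := by
  show aeval sub13 (C a) = C a
  rw [aeval_C, MvPolynomial.algebraMap_eq]

lemma X_sub_sub13_mem (v : Fin 3 × ℕ) : X v - sub13 v ∈ P13 := by
  by_cases h : S13 v
  · obtain ⟨i, n⟩ := v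
    obtain ⟨h1, h2⟩ := h
    obtain ⟨m, rfl⟩ : ∃ m, n = m + 1 := ⟨n - 1, by omega⟩
    rcases h1 with h1 | h1 <;> subst h1
    · rw [sub13_zero (Nat.succ_ne_zero m), sub_zero]
      exact Ideal.subset_span (Or.inl ⟨m, rfl⟩)
    · rw [sub13_two (Nat.succ_ne_zero m), sub_neg_eq_add]
      exact Ideal.subset_span (Or.inr ⟨m, rfl⟩)
  · rw [sub13_of_not_S13 h, sub_self]
    exact zero_mem _

lemma sub_phi13_mem (p : DP (RatFunc ℚ) 3) : p - phi13 p ∈ P13 := by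
  induction p using MvPolynomial.induction_on with
  | C a => rw [phi13_C, sub_self]; exact zero_mem _
  | add p q hp hq =>
    have e : p + q - phi13 (p + q) = (p - phi13 p) + (q - phi13 q) := by
      rw [map_add]; ring
    rw [e]; exact Ideal.add_mem _ hp hq
  | mul_X p v hp =>
    have e : p * X v - phi13 (p * X v) =
        p * (X v - sub13 v) + sub13 v * (p - phi13 p) := by
      rw [map_mul, phi13_X]; ring
    rw [e]
    exact Ideal.add_mem _ (Ideal.mul_mem_left _ _ (X_sub_sub13_mem v))
      (Ideal.mul_mem_left _ _ hp)

lemma ker_phi13_eq : RingHom.ker phi13 = P13 := by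
  apply le_antisymm
  · intro p hp
    have h := sub_phi13_mem p
    rw [RingHom.mem_ker] at hp
    rwa [hp, sub_zero] at h
  · rw [P13, Ideal.span_le]
    rintro q (⟨n, rfl⟩ | ⟨n, rfl⟩) <;> simp only [SetLike.mem_coe, RingHom.mem_ker]
    · rw [phi13_X, sub13_zero (Nat.succ_ne_zero n)]
    · rw [map_add, phi13_X, phi13_X, sub13_two (Nat.succ_ne_zero n), sub13_one,
        neg_add_cancel]

lemma isPrime_P13 : P13.IsPrime := ker_phi13_eq ▸ RingHom.ker_isPrime phi13

lemma mem_P13_D {δ : RatFunc ℚ → RatFunc ℚ} {D : DP (RatFunc ℚ) 3 → DP (RatFunc ℚ) 3}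
    (hD : IsDeriv δ D) {p : DP (RatFunc ℚ) 3} (hp : p ∈ P13) : D p ∈ P13 := by
  have hD0 : D 0 = 0 := by
    have h := hD.map_add 0 0
    rw [add_zero] at h
    exact (left_eq_add.mp h)
  refine Submodule.span_induction ?_ ?_ ?_ ?_ hp
  · rintro q (⟨n, rfl⟩ | ⟨n, rfl⟩)
    · rw [hD.map_X]
      exact Ideal.subset_span (Or.inl ⟨n + 1, rfl⟩)
    · rw [hD.map_add, hD.map_X, hD.map_X]
      exact Ideal.subset_span (Or.inr ⟨n + 1, rfl⟩)
  · rw [hD0]; exact zero_mem _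
  · intro f g _ _ hf hg
    rw [hD.map_add]; exact add_mem hf hg
  · intro c f hf hDf
    rw [smul_eq_mul, hD.leibniz]
    exact add_mem (Ideal.mul_mem_left _ _ hDf) (Ideal.mul_mem_right _ _ hf)

lemma eq_zero_of_mem_ker_phi13 {p : DP (RatFunc ℚ) 3} (hp : p ∈ RingHom.ker phi13)
    (hv : ∀ v ∈ p.vars, ¬ S13 v) : p = 0 := by
  have h : phi13 p = p := by
    show aeval sub13 p = p
    rw [aeval_def, MvPolynomial.algebraMap_eq]
    have h1 : eval₂ C sub13 p = eval₂ C X p := by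
      apply eval₂_congr
      intro i c hic hc
      exact sub13_of_not_S13 (hv _ ((mem_vars _).2 ⟨c, mem_support_iff.2 hc, hic⟩))
    rw [h1, eval₂_eta]
  rw [← h]
  exact RingHom.mem_ker.mp hp

/-! Ranking facts -/

lemma rle_ord_le (r : Ranking 3) (hr : r.Orderly) {v u : Fin 3 × ℕ} (h : r.le v u) :
    v.2 ≤ u.2 := by
  by_contra hc
  push_neg at hc
  obtain ⟨h1, h2⟩ := hr u v hc
  exact h2 (r.le_antisymm _ _ h1 h)

lemma rle_zero_one (r : Ranking 3) (hr : r.Orderly)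
    (hxy : rlt r.le ((0 : Fin 3), (0 : ℕ)) ((1 : Fin 3), (0 : ℕ)))
    (hyz : rlt r.le ((1 : Fin 3), (0 : ℕ)) ((2 : Fin 3), (0 : ℕ)))
    {u : Fin 3 × ℕ} (hu : 1 ≤ u.2) : r.le ((0 : Fin 3), 1) u := by
  rcases eq_or_lt_of_le hu with h1 | h1
  · have he : u = (u.1, 1) := Prod.ext rfl h1.symm
    rw [he]
    rcases fin3_cases u.1 with h | h | h <;> rw [h]
    · exact r.le_refl _
    · exact r.deriv_mono ((0 : Fin 3), 0) ((1 : Fin 3), 0) hxy.1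
    · exact r.deriv_mono ((0 : Fin 3), 0) ((2 : Fin 3), 0) (r.le_trans _ _ _ hxy.1 hyz.1)
  · exact (hr ((0 : Fin 3), 1) u h1).1

/-! Leaders -/

lemma exists_rle_max_s13 (r : Ranking 3) (s : Finset (Fin 3 × ℕ)) :
    s.Nonempty → ∃ u ∈ s, ∀ v ∈ s, r.le v u := by
  classical
  induction s using Finset.induction_on with
  | empty => rintro ⟨u, hu⟩; simp at hu
  | @insert a s ha ih =>
    intro _
    rcases s.eq_empty_or_nonempty with rfl | hs
    · refine ⟨a, Finset.mem_insert_self _ _, ?_⟩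
      intro v hv
      rcases Finset.mem_insert.1 hv with rfl | hv
      · exact r.le_refl v
      · exact absurd hv (by simp)
    · obtain ⟨u, hu, hmax⟩ := ih hs
      rcases r.le_total a u with h | h
      · refine ⟨u, Finset.mem_insert_of_mem hu, ?_⟩
        intro v hv
        rcases Finset.mem_insert.1 hv with rfl | hv
        · exact h
        · exact hmax v hv
      · refine ⟨a, Finset.mem_insert_self _ _, ?_⟩
        intro v hv
        rcases Finset.mem_insert.1 hv with rfl | hv
        · exact r.le_refl v
        · exact r.le_trans _ _ _ (hmax v hv) h

lemma isLeader_leader_s13 (r : Ranking 3) {f : DP (RatFunc ℚ) 3} (hf : f.vars.Nonempty) :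
    IsLeader r.le f (leader r.le f) := by
  obtain ⟨u, hu, hmax⟩ := exists_rle_max_s13 r f.vars hf
  exact Classical.epsilon_spec (⟨u, hu, hmax⟩ : ∃ u, IsLeader r.le f u)

lemma leader_eq (r : Ranking 3) {f : DP (RatFunc ℚ) 3} {u : Fin 3 × ℕ}
    (h : IsLeader r.le f u) : leader r.le f = u := by
  have h2 := isLeader_leader_s13 r ⟨u, h.1⟩
  exact r.le_antisymm _ _ (h.2 _ h2.1) (h2.2 _ h.1)

lemma one_le_degreeOf_s13 {p : DP (RatFunc ℚ) 3} {v : Fin 3 × ℕ} (h : v ∈ p.vars) :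
    1 ≤ p.degreeOf v := by
  rw [mem_vars] at h
  obtain ⟨m, hm, hv⟩ := h
  rw [degreeOf_eq_sup]
  exact le_trans (Nat.one_le_iff_ne_zero.2 (Finsupp.mem_support_iff.1 hv))
    (Finset.le_sup (f := fun m => m v) hm)

/-! The two elements of the characteristic set -/

def va : Fin 3 × ℕ := ((0 : Fin 3), 0)
def vb : Fin 3 × ℕ := ((0 : Fin 3), 1)
def vc : Fin 3 × ℕ := ((2 : Fin 3), 1)
def vd : Fin 3 × ℕ := ((1 : Fin 3), 1)

noncomputable abbrev sgl (v : Fin 3 × ℕ) : (Fin 3 × ℕ) →₀ ℕ := Finsupp.single v 1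

noncomputable def f1 : DP (RatFunc ℚ) 3 := (X va - C RatFunc.X) * X vb
noncomputable def f2 : DP (RatFunc ℚ) 3 := (X va - C RatFunc.X) * (X vc + X vd)

lemma finsupp_ne {m1 m2 : (Fin 3 × ℕ) →₀ ℕ} (w : Fin 3 × ℕ) (h : m1 w ≠ m2 w) :
    m1 ≠ m2 := fun e => h (by rw [e])

lemma support_two {m1 m2 : (Fin 3 × ℕ) →₀ ℕ} {c1 c2 : RatFunc ℚ} (h : m1 ≠ m2)
    (hc1 : c1 ≠ 0) (hc2 : c2 ≠ 0) :
    (monomial m1 c1 + monomial m2 c2 : DP (RatFunc ℚ) 3).support = {m1, m2} := by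
  ext m
  rw [mem_support_iff]
  simp only [coeff_add, coeff_monomial, Finset.mem_insert, Finset.mem_singleton]
  by_cases e1 : m1 = m <;> by_cases e2 : m2 = m <;> simp_all [eq_comm]

lemma support_four {m1 m2 m3 m4 : (Fin 3 × ℕ) →₀ ℕ} {c1 c2 c3 c4 : RatFunc ℚ}
    (h12 : m1 ≠ m2) (h13 : m1 ≠ m3) (h14 : m1 ≠ m4) (h23 : m2 ≠ m3) (h24 : m2 ≠ m4)
    (h34 : m3 ≠ m4) (hc1 : c1 ≠ 0) (hc2 : c2 ≠ 0) (hc3 : c3 ≠ 0) (hc4 : c4 ≠ 0) :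
    (monomial m1 c1 + monomial m2 c2 + monomial m3 c3 + monomial m4 c4 :
      DP (RatFunc ℚ) 3).support = {m1, m2, m3, m4} := by
  ext m
  rw [mem_support_iff]
  simp only [coeff_add, coeff_monomial, Finset.mem_insert, Finset.mem_singleton]
  by_cases e1 : m1 = m <;> by_cases e2 : m2 = m <;> by_cases e3 : m3 = m <;>
    by_cases e4 : m4 = m <;> simp_all [eq_comm]

lemma hX13 (v : Fin 3 × ℕ) : (X v : DP (RatFunc ℚ) 3) = monomial (sgl v) 1 := rfl

lemma f1_eq : f1 = monomial (sgl va + sgl vb) 1 + monomial (sgl vb) (-RatFunc.X) := by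
  rw [f1, C_apply, hX13, hX13]
  simp only [sub_mul, monomial_mul, one_mul, mul_one, zero_add, map_neg]
  ring

lemma f2_eq : f2 = monomial (sgl va + sgl vc) 1 + monomial (sgl va + sgl vd) 1 +
    monomial (sgl vc) (-RatFunc.X) + monomial (sgl vd) (-RatFunc.X) := by
  rw [f2, C_apply, hX13, hX13, hX13]
  simp only [sub_mul, mul_add, monomial_mul, one_mul, mul_one, zero_add, map_neg]
  ring

lemma f1_support : f1.support = {sgl va + sgl vb, sgl vb} := by
  rw [f1_eq]
  refine support_two ?_ one_ne_zero (neg_ne_zero.2 RatFunc.X_ne_zero)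
  refine finsupp_ne va ?_
  simp only [Finsupp.add_apply, Finsupp.single_apply]
  decide

lemma f2_support : f2.support = {sgl va + sgl vc, sgl va + sgl vd, sgl vc, sgl vd} := by
  rw [f2_eq]
  refine support_four (finsupp_ne vc ?_) (finsupp_ne va ?_) (finsupp_ne va ?_)
    (finsupp_ne va ?_) (finsupp_ne va ?_) (finsupp_ne vc ?_) one_ne_zero one_ne_zero
    (neg_ne_zero.2 RatFunc.X_ne_zero) (neg_ne_zero.2 RatFunc.X_ne_zero) <;>
    (simp only [Finsupp.add_apply, Finsupp.single_apply]; decide)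

lemma supp_pair {u v : Fin 3 × ℕ} (h : u ≠ v) :
    (sgl u + sgl v).support = {u, v} := by
  have h1 : (sgl u).support = {u} := Finsupp.support_single_ne_zero _ one_ne_zero
  have h2 : (sgl v).support = {v} := Finsupp.support_single_ne_zero _ one_ne_zero
  rw [Finsupp.support_add_eq (by rw [h1, h2]; exact Finset.disjoint_singleton.2 h), h1, h2]
  ext w; simp

lemma f1_vars : f1.vars = {va, vb} := by
  have hab := supp_pair (u := va) (v := vb) (by decide)
  have hb : (sgl vb).support = {vb} := Finsupp.support_single_ne_zero _ one_ne_zero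
  ext v
  rw [mem_vars]
  simp only [f1_support, Finset.mem_insert, Finset.mem_singleton]
  constructor
  · rintro ⟨m, rfl | rfl, hv⟩
    · rw [hab] at hv
      simpa using hv
    · rw [hb, Finset.mem_singleton] at hv
      subst hv; simp
  · rintro (rfl | rfl)
    · exact ⟨sgl va + sgl vb, Or.inl rfl, by rw [hab]; simp⟩
    · exact ⟨sgl vb, Or.inr rfl, by rw [hb]; simp⟩

lemma f2_vars : f2.vars = {va, vc, vd} := by
  have hac := supp_pair (u := va) (v := vc) (by decide)
  have had := supp_pair (u := va) (v := vd) (by decide)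
  have hc : (sgl vc).support = {vc} := Finsupp.support_single_ne_zero _ one_ne_zero
  have hd : (sgl vd).support = {vd} := Finsupp.support_single_ne_zero _ one_ne_zero
  ext v
  rw [mem_vars]
  simp only [f2_support, Finset.mem_insert, Finset.mem_singleton]
  constructor
  · rintro ⟨m, rfl | rfl | rfl | rfl, hv⟩
    · rw [hac] at hv
      rcases Finset.mem_insert.1 hv with rfl | hv
      · simp
      · rw [Finset.mem_singleton] at hv; subst hv; simp
    · rw [had] at hv
      rcases Finset.mem_insert.1 hv with rfl | hv
      · simp
      · rw [Finset.mem_singleton] at hv; subst hv; simp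
    · rw [hc, Finset.mem_singleton] at hv; subst hv; simp
    · rw [hd, Finset.mem_singleton] at hv; subst hv; simp
  · rintro (rfl | rfl | rfl)
    · exact ⟨sgl va + sgl vc, Or.inl rfl, by rw [hac]; simp⟩
    · exact ⟨sgl vc, Or.inr (Or.inr (Or.inl rfl)), by rw [hc]; simp⟩
    · exact ⟨sgl vd, Or.inr (Or.inr (Or.inr rfl)), by rw [hd]; simp⟩

lemma f1_deg_vb : f1.degreeOf vb = 1 := by
  rw [degreeOf_eq_sup, f1_support, Finset.sup_insert, Finset.sup_singleton]
  simp only [Finsupp.add_apply, Finsupp.single_apply]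
  decide

lemma f1_deg_vc : f1.degreeOf vc = 0 := by
  rw [degreeOf_eq_sup, f1_support, Finset.sup_insert, Finset.sup_singleton]
  simp only [Finsupp.add_apply, Finsupp.single_apply]
  decide

lemma f2_deg_vb : f2.degreeOf vb = 0 := by
  rw [degreeOf_eq_sup, f2_support, Finset.sup_insert, Finset.sup_insert,
    Finset.sup_insert, Finset.sup_singleton]
  simp only [Finsupp.add_apply, Finsupp.single_apply]
  decide

lemma f2_deg_vc : f2.degreeOf vc = 1 := by
  rw [degreeOf_eq_sup, f2_support, Finset.sup_insert, Finset.sup_insert,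
    Finset.sup_insert, Finset.sup_singleton]
  simp only [Finsupp.add_apply, Finsupp.single_apply]
  decide

lemma f1_leader (r : Ranking 3) (hr : r.Orderly) : leader r.le f1 = vb := by
  apply leader_eq r
  constructor
  · rw [f1_vars]; simp
  · intro v hv
    rw [f1_vars] at hv
    rcases Finset.mem_insert.1 hv with rfl | hv
    · exact (hr va vb (by decide)).1
    · rw [Finset.mem_singleton] at hv; subst hv; exact r.le_refl _

lemma f2_leader (r : Ranking 3) (hr : r.Orderly)
    (hyz : rlt r.le ((1 : Fin 3), (0 : ℕ)) ((2 : Fin 3), (0 : ℕ))) :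
    leader r.le f2 = vc := by
  apply leader_eq r
  constructor
  · rw [f2_vars]; simp
  · intro v hv
    rw [f2_vars] at hv
    rcases Finset.mem_insert.1 hv with rfl | hv
    · exact (hr va vc (by decide)).1
    · rcases Finset.mem_insert.1 hv with rfl | hv
      · exact r.le_refl _
      · rw [Finset.mem_singleton] at hv; subst hv
        exact r.deriv_mono ((1 : Fin 3), 0) ((2 : Fin 3), 0) hyz.1

end Proof13Aux

/-- Over `ℚ(t)` with `δ t = 1`, in `ℚ(t){x,y,z}` with an orderly ranking satisfying
`x < y < z`, the set `C = {(x−t)x', (x−t)(z'+y')}` is a characteristic set in Kolchin's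
sense of the radical differential ideal `I = {(x−t)x', x'y', (x−t)(z'+y')}`. -/
theorem statement13
    (δ : RatFunc ℚ → RatFunc ℚ) (hδ : IsFieldDeriv δ) (hδt : δ RatFunc.X = 1)
    (D : DP (RatFunc ℚ) 3 → DP (RatFunc ℚ) 3) (hD : IsDeriv δ D)
    (r : Ranking 3) (hr : r.Orderly)
    (hxy : rlt r.le ((0 : Fin 3), (0 : ℕ)) ((1 : Fin 3), (0 : ℕ)))
    (hyz : rlt r.le ((1 : Fin 3), (0 : ℕ)) ((2 : Fin 3), (0 : ℕ)))
    (x x' y' z' : DP (RatFunc ℚ) 3)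
    (hx : x = X ((0 : Fin 3), (0 : ℕ))) (hx' : x' = X ((0 : Fin 3), (1 : ℕ)))
    (hy' : y' = X ((1 : Fin 3), (1 : ℕ))) (hz' : z' = X ((2 : Fin 3), (1 : ℕ)))
    (t : DP (RatFunc ℚ) 3) (ht : t = C RatFunc.X)
    (Cs : Finset (DP (RatFunc ℚ) 3))
    (hCs : (↑Cs : Set (DP (RatFunc ℚ) 3)) = {(x - t) * x', (x - t) * (z' + y')}) :
    IsCharSet r.le properDeriv
      (radDiffIdeal1 D {(x - t) * x', x' * y', (x - t) * (z' + y')} :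
        Set (DP (RatFunc ℚ) 3)) Cs := by
  have e1 : (x - t) * x' = f1 := by rw [hx, hx', ht]; rfl
  have e2 : x' * y' = X vb * X vd := by rw [hx', hy']; rfl
  have e3 : (x - t) * (z' + y') = f2 := by rw [hx, ht, hz', hy']; rfl
  rw [e1, e3] at hCs
  rw [e1, e2, e3]
  have hL1 : leader r.le f1 = vb := f1_leader r hr
  have hL2 : leader r.le f2 = vc := f2_leader r hr hyz
  have hCs' : ∀ q, q ∈ Cs ↔ q = f1 ∨ q = f2 := by
    intro q
    rw [← Finset.mem_coe, hCs]
    simp [Set.mem_insert_iff]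
  have hf12 : f1 ≠ f2 := by
    intro e
    have h : vb = vc := by rw [← hL1, ← hL2, e]
    exact absurd h (by decide)
  have hFker : ({f1, X vb * X vd, f2} : Set (DP (RatFunc ℚ) 3)) ⊆
      ↑(RingHom.ker phi13) := by
    rintro q hq
    simp only [Set.mem_insert_iff, Set.mem_singleton_iff] at hq
    rcases hq with rfl | rfl | rfl <;> simp only [SetLike.mem_coe, RingHom.mem_ker]
    · rw [f1, map_mul, phi13_X, show sub13 vb = 0 from sub13_zero one_ne_zero, mul_zero]
    · rw [map_mul, phi13_X, show sub13 vb = 0 from sub13_zero one_ne_zero, zero_mul]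
    · rw [f2, map_mul, map_add, phi13_X, phi13_X,
        show sub13 vc = - X vd from sub13_two one_ne_zero,
        show sub13 vd = X vd from sub13_one 1, neg_add_cancel, mul_zero]
  have hIker : radDiffIdeal1 D {f1, X vb * X vd, f2} ≤ RingHom.ker phi13 := by
    apply sInf_le
    refine ⟨hFker, ?_, ?_⟩
    · intro j q hq
      rw [ker_phi13_eq] at hq ⊢
      exact mem_P13_D hD hq
    · rw [ker_phi13_eq]
      exact isPrime_P13.isRadical
  have hmemI : ∀ q ∈ ({f1, X vb * X vd, f2} : Set (DP (RatFunc ℚ) 3)),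
      q ∈ radDiffIdeal1 D {f1, X vb * X vd, f2} := fun q hq =>
    Ideal.mem_sInf.2 fun J hJ => hJ.1 hq
  have hrk1 : rankOf r.le f1 = (vb, 1) := by
    show (leader r.le f1, f1.degreeOf (leader r.le f1)) = (vb, 1)
    rw [hL1, f1_deg_vb]
  have hrk2 : rankOf r.le f2 = (vc, 1) := by
    show (leader r.le f2, f2.degreeOf (leader r.le f2)) = (vc, 1)
    rw [hL2, f2_deg_vc]
  refine ⟨⟨?_, ?_⟩, ?_, ?_⟩
  · -- vars nonempty
    intro f hf
    rcases (hCs' f).1 hf with rfl | rfl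
    · rw [f1_vars]; exact ⟨va, Finset.mem_insert_self _ _⟩
    · rw [f2_vars]; exact ⟨va, Finset.mem_insert_self _ _⟩
  · -- autoreduced
    intro f hf g hg hne
    rcases (hCs' f).1 hf with rfl | rfl <;> rcases (hCs' g).1 hg with rfl | rfl
    · exact absurd rfl hne
    · constructor
      · intro v hv
        rw [hL2]
        rw [f1_vars] at hv
        intro hpd
        rcases Finset.mem_insert.1 hv with rfl | hv
        · exact absurd hpd.1 (by decide : ¬ va.1 = vc.1)
        · rw [Finset.mem_singleton] at hv; subst hv
          exact absurd hpd.1 (by decide : ¬ vb.1 = vc.1)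
      · rw [hL2, f1_deg_vc, f2_deg_vc]
        exact Nat.zero_lt_one
    · constructor
      · intro v hv
        rw [hL1]
        rw [f2_vars] at hv
        intro hpd
        rcases Finset.mem_insert.1 hv with rfl | hv
        · exact absurd hpd.2 (by decide : ¬ vb.2 < va.2)
        · rcases Finset.mem_insert.1 hv with rfl | hv
          · exact absurd hpd.1 (by decide : ¬ vc.1 = vb.1)
          · rw [Finset.mem_singleton] at hv; subst hv
            exact absurd hpd.1 (by decide : ¬ vd.1 = vb.1)
      · rw [hL1, f2_deg_vb, f1_deg_vb]
        exact Nat.zero_lt_one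
    · exact absurd rfl hne
  · -- Cs ⊆ I
    intro q hq
    rw [hCs] at hq
    simp only [Set.mem_insert_iff, Set.mem_singleton_iff] at hq
    rcases hq with rfl | rfl
    · exact hmemI _ (by simp)
    · exact hmemI _ (by simp)
  · -- minimality
    intro B hB hBI
    obtain ⟨hBne, hBred⟩ := hB
    have hBker : ∀ f ∈ B, f ∈ RingHom.ker phi13 := fun f hf =>
      hIker (hBI (Finset.mem_coe.2 hf))
    have hBlead : ∀ f ∈ B, IsLeader r.le f (leader r.le f) := fun f hf =>
      isLeader_leader_s13 r (hBne f hf)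
    have hBzero : ∀ f ∈ B, (∀ v ∈ f.vars, ¬ S13 v) → False := by
      intro f hf hz
      have h0 := eq_zero_of_mem_ker_phi13 (hBker f hf) hz
      have hne := hBne f hf
      rw [h0, vars_0] at hne
      exact Finset.not_nonempty_empty hne
    have hBleadord : ∀ f ∈ B, 1 ≤ (leader r.le f).2 := by
      intro f hf
      by_contra hc
      push_neg at hc
      refine hBzero f hf ?_
      intro v hv hS
      have h1 := rle_ord_le r hr ((hBlead f hf).2 v hv)
      have h2 := hS.2
      omega
    have hB01 : ∀ f ∈ B, r.le ((0 : Fin 3), 1) (leader r.le f) := fun f hf =>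
      rle_zero_one r hr hxy hyz (hBleadord f hf)
    have hBdeg1 : ∀ f ∈ B, 1 ≤ f.degreeOf (leader r.le f) := fun f hf =>
      one_le_degreeOf_s13 (hBlead f hf).1
    have hBleadne : ∀ f ∈ B, ∀ g ∈ B, f ≠ g → leader r.le f ≠ leader r.le g := by
      intro f hf g hg hne he
      have h1 := (hBred f hf g hg hne).2
      have h2 := (hBred g hg f hf (Ne.symm hne)).2
      rw [he] at h2
      omega
    have trich1 : ∀ f ∈ B, rkLt r.le (vb, 1) (rankOf r.le f) ∨ rankOf r.le f = (vb, 1) := by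
      intro f hf
      by_cases he : leader r.le f = vb
      · have hd := hBdeg1 f hf
        rcases eq_or_lt_of_le hd with hd1 | hd1
        · right
          show (leader r.le f, f.degreeOf (leader r.le f)) = (vb, 1)
          rw [he] at hd1 ⊢
          rw [← hd1]
        · left
          exact Or.inr ⟨he.symm, hd1⟩
      · left
        exact Or.inl ⟨hB01 f hf, fun e => he e.symm⟩
    have hLBex : ∃ L : List (DP (RatFunc ℚ) 3), L.Nodup ∧ (∀ f, f ∈ L ↔ f ∈ B) ∧
        L.Pairwise (fun f g => rkLt r.le (rankOf r.le f) (rankOf r.le g)) := by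
      classical
      let rel : DP (RatFunc ℚ) 3 → DP (RatFunc ℚ) 3 → Prop :=
        fun f g => r.le (leader r.le f) (leader r.le g)
      letI : DecidableRel rel := fun f g => Classical.dec _
      haveI : IsTotal (DP (RatFunc ℚ) 3) rel := ⟨fun f g => r.le_total _ _⟩
      haveI : IsTrans (DP (RatFunc ℚ) 3) rel :=
        ⟨fun f g h hfg hgh => r.le_trans _ _ _ hfg hgh⟩
      have hperm := List.perm_insertionSort rel B.toList
      have hnod : (List.insertionSort rel B.toList).Nodup :=
        hperm.nodup_iff.2 B.nodup_toList
      have hmem : ∀ f, f ∈ List.insertionSort rel B.toList ↔ f ∈ B := fun f => by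
        rw [hperm.mem_iff, Finset.mem_toList]
      have hsor : (List.insertionSort rel B.toList).Pairwise rel :=
        List.pairwise_insertionSort rel B.toList
      refine ⟨List.insertionSort rel B.toList, hnod, hmem, ?_⟩
      refine (List.Pairwise.and_mem.1 (List.Pairwise.and hsor hnod)).imp ?_
      rintro f g ⟨hfm, hgm, hle, hne⟩
      exact Or.inl ⟨hle, hBleadne f ((hmem f).1 hfm) g ((hmem g).1 hgm) hne⟩
    obtain ⟨LB, hndLB, hmemLB, hpwLB⟩ := hLBex
    refine ⟨[f1, f2], LB, ?_, hndLB, ?_, hmemLB, ?_, (List.isChain_map _).2 hpwLB.isChain, ?_⟩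
    · simp [hf12]
    · intro f
      simp [hCs' f]
    · simp only [List.map_cons, List.map_nil]
      rw [hrk1, hrk2]
      exact List.isChain_pair.2 (Or.inl ⟨r.deriv_mono ((0 : Fin 3), 0) ((2 : Fin 3), 0)
        (r.le_trans _ _ _ hxy.1 hyz.1), by decide⟩)
    · simp only [List.map_cons, List.map_nil]
      rw [hrk1, hrk2]
      rcases LB with _ | ⟨b1, LB'⟩
      · exact Or.inl trivial
      · have hb1B : b1 ∈ B := (hmemLB b1).1 (List.mem_cons_self)
        simp only [List.map_cons]
        rcases trich1 b1 hb1B with h1 | h1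
        · exact Or.inl (Or.inl h1)
        · have he1 : leader r.le b1 = vb := congrArg Prod.fst h1
          have hd1 : b1.degreeOf vb = 1 := by
            have h := congrArg Prod.snd h1
            rw [show (rankOf r.le b1).2 = b1.degreeOf (leader r.le b1) from rfl, he1] at h
            exact h
          rcases LB' with _ | ⟨b2, LB''⟩
          · exact Or.inl (Or.inr ⟨h1.symm, trivial⟩)
          · have hb2B : b2 ∈ B := (hmemLB b2).1 (by simp)
            have hne21 : b2 ≠ b1 := by
              intro e
              have h := (List.nodup_cons.1 hndLB).1
              rw [← e] at h
              exact h (List.mem_cons_self)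
            have hnevd : leader r.le b2 ≠ vd := by
              intro hvd
              refine hBzero b2 hb2B ?_
              intro v hv hS
              have hvle : r.le v vd := by rw [← hvd]; exact (hBlead b2 hb2B).2 v hv
              have hv2 : v.2 ≤ 1 := rle_ord_le r hr hvle
              obtain ⟨hior, h1v⟩ := hS
              have hv2' : v.2 = 1 := le_antisymm hv2 h1v
              rcases hior with h0 | hh2
              · have hveq : v = vb := Prod.ext h0 hv2'
                have hlt := (hBred b2 hb2B b1 hb1B hne21).2
                rw [he1, hd1] at hlt
                have hge := one_le_degreeOf_s13 (p := b2) (v := vb) (hveq ▸ hv)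
                omega
              · have hveq : v = vc := Prod.ext hh2 hv2'
                have hdc : r.le vd vc := r.deriv_mono ((1 : Fin 3), 0) ((2 : Fin 3), 0) hyz.1
                have h : vc = vd := r.le_antisymm _ _ (hveq ▸ hvle) hdc
                exact absurd h (by decide)
            have hne0 : leader r.le b2 ≠ vb := by
              intro e
              exact hBleadne b2 hb2B b1 hb1B hne21 (by rw [e, he1])
            have trich2 : rkLt r.le (vc, 1) (rankOf r.le b2) ∨ rankOf r.le b2 = (vc, 1) := by
              have hu1 := hBleadord b2 hb2B
              rcases eq_or_lt_of_le hu1 with hu2 | hu2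
              · rcases fin3_cases (leader r.le b2).1 with h | h | h
                · exact absurd (Prod.ext h hu2.symm) hne0
                · exact absurd (Prod.ext h hu2.symm) hnevd
                · have hueq : leader r.le b2 = vc := Prod.ext h hu2.symm
                  have hd := hBdeg1 b2 hb2B
                  rcases eq_or_lt_of_le hd with hd2 | hd2
                  · right
                    show (leader r.le b2, b2.degreeOf (leader r.le b2)) = (vc, 1)
                    rw [hueq] at hd2 ⊢
                    rw [← hd2]
                  · left
                    exact Or.inr ⟨hueq.symm, hd2⟩
              · left
                exact Or.inl (hr vc (leader r.le b2) hu2)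
            rcases trich2 with h2 | h2
            · exact Or.inl (Or.inr ⟨h1.symm, Or.inl h2⟩)
            · rcases LB'' with _ | ⟨b3, LB'''⟩
              · right
                simp only [List.map_cons, List.map_nil]
                rw [h1, h2]
              · exfalso
                have hb3B : b3 ∈ B := (hmemLB b3).1 (by simp)
                have hm3 : b3 ∈ b2 :: b3 :: LB''' := by simp
                have hne31 : b3 ≠ b1 := by
                  intro e
                  have h := (List.nodup_cons.1 hndLB).1
                  rw [← e] at h
                  exact h hm3
                have hne32 : b3 ≠ b2 := by
                  intro e
                  have h := (List.nodup_cons.1 (List.nodup_cons.1 hndLB).2).1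
                  rw [← e] at h
                  exact h (List.mem_cons_self)
                have he2 : leader r.le b2 = vc := congrArg Prod.fst h2
                have hd2 : b2.degreeOf vc = 1 := by
                  have h := congrArg Prod.snd h2
                  rw [show (rankOf r.le b2).2 = b2.degreeOf (leader r.le b2) from rfl,
                    he2] at h
                  exact h
                have hred31 := hBred b3 hb3B b1 hb1B hne31
                have hred32 := hBred b3 hb3B b2 hb2B hne32
                refine hBzero b3 hb3B ?_
                intro v hv hS
                obtain ⟨hior, h1v⟩ := hS
                rcases hior with h0 | hh2
                · rcases eq_or_lt_of_le h1v with hveq | hlt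
                  · have hvb : v = vb := Prod.ext h0 hveq.symm
                    have hlt1 := hred31.2
                    rw [he1, hd1] at hlt1
                    have hge := one_le_degreeOf_s13 (p := b3) (v := vb) (hvb ▸ hv)
                    omega
                  · exact hred31.1 v hv (show properDeriv v (leader r.le b1) by
                      rw [he1]; exact ⟨h0, hlt⟩)
                · rcases eq_or_lt_of_le h1v with hveq | hlt
                  · have hvc : v = vc := Prod.ext hh2 hveq.symm
                    have hlt1 := hred32.2
                    rw [he2, hd2] at hlt1
                    have hge := one_le_degreeOf_s13 (p := b3) (v := vc) (hvc ▸ hv)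
                    omega
                  · exact hred32.1 v hv (show properDeriv v (leader r.le b2) by
                      rw [he2]; exact ⟨hh2, hlt⟩)

end DiffAlg
end
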